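/- arXiv:1508.02501 — 6 statements merged into one kernel-verified Lean document; each statement's English description precedes it below -/
import Mathlib

section
/- Let {b_n}_{n≥1} be a nonnegative, non-increasing real sequence, let β ∈ L¹([0,T];ℝ₊), and let ψ:ℝ₊→ℝ₊ be a nondecreasing continuous function with ψ(x) ≤ k(1+x) for all x ≥ 0, where k > 0. For each n ≥ 1 let P_n be a probability measure on (Ω,F) equivalent to P, and let (u_n(t))_{t∈[0,T]} be a nonnegative (F_t)-progressively measurable process with E_{P_n}[sup_{t∈[0,T]} u_n(t)] < +∞ and such that for each t ∈ [0,T], u_n(t) ≤ b_n + E_{P_n}[∫_t^T β(s)ψ(u_n(s)) ds | F_t] holds P-almost surely. Then for each t ∈ [0,T], sup_{n≥1} u_n(t) ≤ (b₁ + k∫₀^T β(s) ds)·exp(k∫₀^T β(s) ds) P-almost surely. (Uniform bound (5) in the proof of Lemma 2.1.) -/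
/-!
Fix `n ≥ 1` and `t`, write `Q = P_n`, `B = ∫₀^T β` and `C = (b₁ + kB) e^{kB}`, and let
`A = {u_n(t) > C} ∈ ℱ_t`. For `s ≥ t`, integrating the defining inequality of `u_n(s)` over
`A ∈ ℱ_s`, then using `ψ(x) ≤ k(1 + x)` and Tonelli, gives for `z(s) = E_Q[u_n(s); A]`
the backward integral inequality `z(s) ≤ (b_n + kB) Q(A) + ∫_{(s,∞)} z dν`, where
`ν = kβ(r) dr` on `[0,T]`. Since `z` is bounded by `E_Q[sup_t u_n(t)]` and `ν` has no atoms,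
`∫_{(s,∞)} ν(x,∞)^j dν(x) = ν(s,∞)^{j+1}/(j+1)`, so iterating the inequality yields
`z(t) ≤ (b_n + kB) Q(A) e^{kB} ≤ C Q(A)`. As `u_n(t) > C` on `A`, this forces `Q(A) = 0`,
and `P(A) = 0` because `P ≪ P_n`.
-/

open MeasureTheory Set Filter Topology
open scoped ENNReal Nat

noncomputable section

/-- The time interval `[0,T]`, where `0 < T ≤ +∞` is an extended real
(understood as `[0,+∞)` when `T = +∞`). -/
def timeSet (T : EReal) : Set ℝ := {s : ℝ | 0 ≤ s ∧ (s : EReal) ≤ T}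

section BackwardGronwall

variable {ν : Measure ℝ}

lemma measurable_measure_Ioi (ν : Measure ℝ) : Measurable fun x ↦ ν (Ioi x) :=
  Antitone.measurable fun _ _ h ↦ measure_mono (Ioi_subset_Ioi h)

lemma lintegral_Ioi_measure_Ioc_mul [SFinite ν] [NullSingletonClass ν] {g : ℝ → ℝ≥0∞}
    (hg : Measurable g) (s : ℝ) :
    ∫⁻ x in Ioi s, ν (Ioc s x) * g x ∂ν = ∫⁻ r in Ioi s, ∫⁻ x in Ioi r, g x ∂ν ∂ν := by
  have hmeas : Measurable (Function.uncurry fun x r ↦ (Iic x).indicator (fun _ ↦ g x) r) := by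
    change Measurable ({p : ℝ × ℝ | p.2 ≤ p.1}.indicator fun p ↦ g p.1)
    exact (hg.comp measurable_fst).indicator (measurableSet_le measurable_snd measurable_fst)
  calc ∫⁻ x in Ioi s, ν (Ioc s x) * g x ∂ν
      = ∫⁻ x in Ioi s, ∫⁻ r in Ioi s, (Iic x).indicator (fun _ ↦ g x) r ∂ν ∂ν := by
        refine lintegral_congr fun x ↦ ?_
        rw [lintegral_indicator_const measurableSet_Iic, Measure.restrict_apply measurableSet_Iic,
          Iic_inter_Ioi, mul_comm]
    _ = ∫⁻ r in Ioi s, ∫⁻ x in Ioi s, (Iic x).indicator (fun _ ↦ g x) r ∂ν ∂ν :=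
        lintegral_lintegral_swap hmeas.aemeasurable
    _ = ∫⁻ r in Ioi s, ∫⁻ x in Ioi r, g x ∂ν ∂ν := by
        refine setLIntegral_congr_fun measurableSet_Ioi fun r hr ↦ ?_
        have hind : ∀ x, (Iic x).indicator (fun _ ↦ g x) r = (Ici r).indicator g x := fun x ↦ by
          by_cases hrx : r ≤ x <;> simp [hrx]
        simp_rw [hind, lintegral_indicator measurableSet_Ici,
          Measure.restrict_restrict measurableSet_Ici,
          inter_eq_left.mpr (Ici_subset_Ioi.mpr (show s < r from hr)),
          restrict_Ioi_eq_restrict_Ici]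

lemma succ_mul_lintegral_Ioi_measure_Ioi_pow [SFinite ν] [NullSingletonClass ν] (j : ℕ) (s : ℝ) :
    (j + 1 : ℝ≥0∞) * ∫⁻ x in Ioi s, ν (Ioi x) ^ j ∂ν = ν (Ioi s) ^ (j + 1) := by
  induction j generalizing s with
  | zero => simp
  | succ j ih =>
    have hφ := measurable_measure_Ioi ν
    have hsplit : ν (Ioi s) * ∫⁻ x in Ioi s, ν (Ioi x) ^ j ∂ν
        = ∫⁻ r in Ioi s, (∫⁻ x in Ioi r, ν (Ioi x) ^ j ∂ν) ∂ν
          + ∫⁻ x in Ioi s, ν (Ioi x) ^ (j + 1) ∂ν := by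
      have hIoc : Measurable fun x ↦ ν (Ioc s x) :=
        Monotone.measurable fun _ _ h ↦ measure_mono (Ioc_subset_Ioc_right h)
      rw [← lintegral_Ioi_measure_Ioc_mul (hφ.pow_const j),
        ← lintegral_add_left (f := fun x ↦ ν (Ioc s x) * ν (Ioi x) ^ j)
          (hIoc.mul (hφ.pow_const j)),
        ← lintegral_const_mul _ (hφ.pow_const j)]
      refine setLIntegral_congr_fun measurableSet_Ioi fun x hx ↦ ?_
      rw [← Ioc_union_Ioi_eq_Ioi (le_of_lt hx), measure_union (Ioc_disjoint_Ioi le_rfl)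
        measurableSet_Ioi, pow_succ, add_mul, mul_comm (_ ^ j)]
    have hint : (j + 1 : ℝ≥0∞) * ∫⁻ r in Ioi s, (∫⁻ x in Ioi r, ν (Ioi x) ^ j ∂ν) ∂ν
        = ∫⁻ x in Ioi s, ν (Ioi x) ^ (j + 1) ∂ν := by
      rw [← lintegral_const_mul' _ _ (by simp)]
      simp_rw [ih]
    calc ((j + 1 : ℕ) + 1 : ℝ≥0∞) * ∫⁻ x in Ioi s, ν (Ioi x) ^ (j + 1) ∂ν
        = (j + 1 : ℝ≥0∞) * (ν (Ioi s) * ∫⁻ x in Ioi s, ν (Ioi x) ^ j ∂ν) := by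
          rw [hsplit, mul_add, hint]; push_cast; ring
      _ = ν (Ioi s) ^ (j + 1 + 1) := by rw [mul_left_comm, ih]; ring

lemma lintegral_Ioi_measure_Ioi_pow_div_factorial [SFinite ν] [NullSingletonClass ν]
    (j : ℕ) (s : ℝ) :
    ∫⁻ x in Ioi s, ν (Ioi x) ^ j / j ! ∂ν = ν (Ioi s) ^ (j + 1) / (j + 1)! := by
  have h := succ_mul_lintegral_Ioi_measure_Ioi_pow (ν := ν) j s
  simp_rw [div_eq_mul_inv]
  rw [lintegral_mul_const _ ((measurable_measure_Ioi ν).pow_const j), ← h, Nat.factorial_succ,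
    Nat.cast_mul, ENNReal.mul_inv (by simp) (by simp)]
  push_cast
  rw [mul_comm _ (∫⁻ _ in _, _ ∂ν), mul_assoc, ← mul_assoc ((j : ℝ≥0∞) + 1),
    ENNReal.mul_inv_cancel (by simp) (by simp), one_mul]

lemma le_sum_add_of_le_add_lintegral_Ioi [SFinite ν] [NullSingletonClass ν] {E : Set ℝ}
    (hE : ∀ᵐ r ∂ν, r ∈ E) {z : ℝ → ℝ≥0∞} {c M : ℝ≥0∞} {t : ℝ}
    (hbdd : ∀ s ∈ E, t ≤ s → z s ≤ M)
    (hrec : ∀ s ∈ E, t ≤ s → z s ≤ c + ∫⁻ r in Ioi s, z r ∂ν) (m : ℕ) :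
    ∀ s ∈ E, t ≤ s →
      z s ≤ c * ∑ j ∈ Finset.range m, ν (Ioi s) ^ j / j ! + M * (ν (Ioi s) ^ m / m !) := by
  induction m with
  | zero => simpa using hbdd
  | succ m ih =>
    intro s hs hts
    have hterm (j : ℕ) : Measurable fun x ↦ ν (Ioi x) ^ j / j ! :=
      ((measurable_measure_Ioi ν).pow_const j).div_const _
    have hz : ∫⁻ r in Ioi s, z r ∂ν ≤ ∫⁻ r in Ioi s,
        c * ∑ j ∈ Finset.range m, ν (Ioi r) ^ j / j ! + M * (ν (Ioi r) ^ m / m !) ∂ν := by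
      refine lintegral_mono_ae ?_
      filter_upwards [ae_restrict_of_ae hE, ae_restrict_mem measurableSet_Ioi] with r hrE hr
      exact ih r hrE (hts.trans (le_of_lt hr))
    rw [lintegral_add_left ((Finset.measurable_sum _ fun j _ ↦ hterm j).const_mul c),
      lintegral_const_mul _ (Finset.measurable_sum _ fun j _ ↦ hterm j),
      lintegral_const_mul _ (hterm m), lintegral_finsetSum _ fun j _ ↦ hterm j] at hz
    simp_rw [lintegral_Ioi_measure_Ioi_pow_div_factorial] at hz
    refine (hrec s hs hts).trans ((add_le_add_right hz c).trans_eq ?_)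
    rw [Finset.sum_range_succ']
    simp only [pow_zero, Nat.factorial_zero, Nat.cast_one, div_one]
    ring

theorem le_mul_exp_of_le_add_lintegral_Ioi [IsFiniteMeasure ν] [NullSingletonClass ν]
    {E : Set ℝ} (hE : ∀ᵐ r ∂ν, r ∈ E) {z : ℝ → ℝ≥0∞} {c M : ℝ≥0∞} (hM : M ≠ ∞) {t : ℝ}
    (ht : t ∈ E) (hbdd : ∀ s ∈ E, t ≤ s → z s ≤ M)
    (hrec : ∀ s ∈ E, t ≤ s → z s ≤ c + ∫⁻ r in Ioi s, z r ∂ν) :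
    z t ≤ c * ENNReal.ofReal (Real.exp (ν (Ioi t)).toReal) := by
  set a := (ν (Ioi t)).toReal
  have hterm (j : ℕ) : ν (Ioi t) ^ j / j ! = ENNReal.ofReal (a ^ j / j !) := by
    rw [ENNReal.ofReal_div_of_pos (by positivity), ENNReal.ofReal_pow ENNReal.toReal_nonneg,
      ENNReal.ofReal_toReal (measure_ne_top ν _), ENNReal.ofReal_natCast]
  have hsum (m : ℕ) : ∑ j ∈ Finset.range m, ν (Ioi t) ^ j / j ! ≤ ENNReal.ofReal (Real.exp a) := by
    simp_rw [hterm]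
    rw [← ENNReal.ofReal_sum_of_nonneg fun j _ ↦ by positivity]
    exact ENNReal.ofReal_le_ofReal (Real.sum_le_exp_of_nonneg ENNReal.toReal_nonneg m)
  have hrem : Tendsto (fun m : ℕ ↦ M * (ν (Ioi t) ^ m / m !)) atTop (𝓝 0) := by
    simp_rw [hterm]
    simpa using ENNReal.Tendsto.const_mul
      (ENNReal.tendsto_ofReal (FloorSemiring.tendsto_pow_div_factorial_atTop a)) (Or.inr hM)
  refine le_of_tendsto_of_tendsto' tendsto_const_nhds (by simpa using tendsto_const_nhds.add hrem)
    fun m ↦ (le_sum_add_of_le_add_lintegral_Ioi hE hbdd hrec m t ht le_rfl).trans ?_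
  exact add_le_add_left (mul_le_mul_right (hsum m) c) _

end BackwardGronwall

lemma MeasureTheory.IsStronglyProgressive.stronglyMeasurable_uncurry {Ω β : Type*}
    {m0 : MeasurableSpace Ω} [TopologicalSpace β] [TopologicalSpace.PseudoMetrizableSpace β]
    {ℱ : Filtration ℝ m0} {u : ℝ → Ω → β} (hu : IsStronglyProgressive ℱ u) :
    StronglyMeasurable fun p : ℝ × Ω ↦ u p.1 p.2 := by
  have happrox (i : ℕ) : StronglyMeasurable fun p : ℝ × Ω ↦ u (min p.1 i) p.2 := by
    have hφ : Measurable fun p : ℝ × Ω ↦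
        ((⟨min p.1 i, mem_Iic.mpr (min_le_right _ _)⟩ : Iic (i : ℝ)), p.2) :=
      (measurable_fst.min measurable_const).subtype_mk.prodMk measurable_snd
    exact ((hu i).mono (sup_le_sup le_rfl (MeasurableSpace.comap_mono (ℱ.le i)))).comp_measurable hφ
  refine stronglyMeasurable_of_tendsto atTop happrox (tendsto_pi_nhds.mpr fun p ↦ ?_)
  exact tendsto_atTop_of_eventually_const fun i (hi : ⌈p.1⌉₊ ≤ i) ↦ by
    rw [min_eq_left ((Nat.le_ceil p.1).trans (Nat.cast_le.mpr hi))]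

lemma setLIntegral_ofReal_condExp_le {Ω : Type*} {m m0 : MeasurableSpace Ω} {μ : Measure Ω}
    (hm : m ≤ m0) [SigmaFinite (μ.trim hm)] {f : Ω → ℝ} (hf : 0 ≤ᵐ[μ] f) {A : Set Ω}
    (hA : MeasurableSet[m] A) :
    ∫⁻ ω in A, ENNReal.ofReal (μ[f | m] ω) ∂μ ≤ ∫⁻ ω in A, ENNReal.ofReal (f ω) ∂μ := by
  by_cases hfi : Integrable f μ
  · rw [← ofReal_integral_eq_lintegral_ofReal integrable_condExp.integrableOn
      (ae_restrict_of_ae (condExp_nonneg hf)), setIntegral_condExp hm hfi hA,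
      ofReal_integral_eq_lintegral_ofReal hfi.integrableOn (ae_restrict_of_ae hf)]
  · simp [condExp_of_not_integrable hfi]

lemma ae_le_of_setLIntegral_le {Ω : Type*} {m0 : MeasurableSpace Ω} {μ : Measure Ω}
    [IsFiniteMeasure μ] {f : Ω → ℝ} (hf : Measurable f) {a : ℝ} (ha : 0 ≤ a)
    (h : ∫⁻ ω in {ω | a < f ω}, ENNReal.ofReal (f ω) ∂μ ≤ ENNReal.ofReal a * μ {ω | a < f ω}) :
    ∀ᵐ ω ∂μ, f ω ≤ a := by
  simp_rw [ae_iff, not_le]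
  by_contra hne
  refine h.not_gt ?_
  rw [← setLIntegral_const]
  exact setLIntegral_strict_mono (measurableSet_lt measurable_const hf) hne hf.ennreal_ofReal
    (by rw [setLIntegral_const]; finiteness) (ae_of_all _ fun ω hω ↦ (ENNReal.ofReal_lt_ofReal_iff
      (ha.trans_lt hω)).2 hω)

section IntegratedInequality

variable {E : Set ℝ} {β ψ : ℝ → ℝ} {k : ℝ}

lemma ofReal_setIntegral_mul_le_setLIntegral_withDensity (hE : MeasurableSet E) (hk : 0 ≤ k)
    (hβ_nonneg : ∀ s ∈ E, 0 ≤ β s) (hβ_meas : AEMeasurable β (volume.restrict E))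
    (hψ_nonneg : ∀ x, 0 ≤ x → 0 ≤ ψ x) (hψ_growth : ∀ x, 0 ≤ x → ψ x ≤ k * (1 + x))
    {x : ℝ → ℝ} (hx : ∀ r, 0 ≤ x r) {S : Set ℝ} (hS : MeasurableSet S) :
    ENNReal.ofReal (∫ r in S ∩ E, β r * ψ (x r))
      ≤ ∫⁻ r in S, 1 + ENNReal.ofReal (x r)
          ∂(volume.restrict E).withDensity fun r ↦ ENNReal.ofReal (k * β r) := by
  have hpoint : ∀ r ∈ S ∩ E,
      ‖β r * ψ (x r)‖ₑ ≤ ENNReal.ofReal (k * β r) * (1 + ENNReal.ofReal (x r)) := fun r hr ↦ by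
    have hβr := hβ_nonneg r hr.2
    rw [Real.enorm_eq_ofReal (mul_nonneg hβr (hψ_nonneg _ (hx r))), ← ENNReal.ofReal_one,
      ← ENNReal.ofReal_add zero_le_one (hx r), ← ENNReal.ofReal_mul (mul_nonneg hk hβr)]
    exact ENNReal.ofReal_le_ofReal (by nlinarith [hψ_growth _ (hx r)])
  calc ENNReal.ofReal (∫ r in S ∩ E, β r * ψ (x r))
      ≤ ∫⁻ r in S ∩ E, ‖β r * ψ (x r)‖ₑ :=
        (Real.ofReal_le_enorm _).trans (enorm_integral_le_lintegral_enorm _)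
    _ ≤ ∫⁻ r in S ∩ E, ENNReal.ofReal (k * β r) * (1 + ENNReal.ofReal (x r)) :=
        setLIntegral_mono' (hS.inter hE) hpoint
    _ = _ := by
        rw [setLIntegral_withDensity_eq_setLIntegral_mul_non_measurable₀ _
          ((hβ_meas.const_mul k).ennreal_ofReal.restrict) _ hS (ae_of_all _ fun _ ↦
          ENNReal.ofReal_lt_top), Measure.restrict_restrict hS]
        rfl

variable {Ω : Type*} {m0 : MeasurableSpace Ω} {ℱ : Filtration ℝ m0} {Q : Measure Ω}
  [IsFiniteMeasure Q] {u : ℝ → Ω → ℝ} {b : ℝ}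

lemma setLIntegral_ofReal_le_add_lintegral_Ioi {ν : Measure ℝ} [SFinite ν]
    (hu_meas : Measurable fun p : ℝ × Ω ↦ u p.1 p.2) {s : ℝ} {F : Ω → ℝ} (hF_nonneg : 0 ≤ᵐ[Q] F)
    (hF : ∀ ω, ENNReal.ofReal (F ω) ≤ ∫⁻ r in Ioi s, 1 + ENNReal.ofReal (u r ω) ∂ν)
    (hs : ∀ᵐ ω ∂Q, u s ω ≤ b + Q[F | ℱ s] ω) {A : Set Ω} (hA : MeasurableSet[ℱ s] A) :
    ∫⁻ ω in A, ENNReal.ofReal (u s ω) ∂Q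
      ≤ (ENNReal.ofReal b + ν (Ioi s)) * Q A
        + ∫⁻ r in Ioi s, ∫⁻ ω in A, ENNReal.ofReal (u r ω) ∂Q ∂ν := by
  have hu_ofReal : Measurable fun p : ℝ × Ω ↦ ENNReal.ofReal (u p.1 p.2) := hu_meas.ennreal_ofReal
  calc ∫⁻ ω in A, ENNReal.ofReal (u s ω) ∂Q
      ≤ ∫⁻ ω in A, ENNReal.ofReal b + ENNReal.ofReal (Q[F | ℱ s] ω) ∂Q := by
        refine lintegral_mono_ae (ae_restrict_of_ae ?_)
        filter_upwards [hs] with ω hω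
        exact (ENNReal.ofReal_le_ofReal hω).trans ENNReal.ofReal_add_le
    _ ≤ ENNReal.ofReal b * Q A + ∫⁻ ω in A, ENNReal.ofReal (F ω) ∂Q := by
        rw [lintegral_add_left measurable_const, setLIntegral_const]
        exact add_le_add le_rfl (setLIntegral_ofReal_condExp_le (ℱ.le s) hF_nonneg hA)
    _ ≤ ENNReal.ofReal b * Q A
          + ∫⁻ ω in A, ∫⁻ r in Ioi s, 1 + ENNReal.ofReal (u r ω) ∂ν ∂Q := by
        gcongr with ω
        exact hF ω
    _ = ENNReal.ofReal b * Q A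
          + ∫⁻ r in Ioi s, Q A + ∫⁻ ω in A, ENNReal.ofReal (u r ω) ∂Q ∂ν := by
        rw [lintegral_lintegral_swap (f := fun ω r ↦ 1 + ENNReal.ofReal (u r ω))
          ((hu_ofReal.comp measurable_swap).const_add 1).aemeasurable]
        simp_rw [lintegral_add_left measurable_const, setLIntegral_const, one_mul]
    _ = _ := by
        rw [lintegral_add_left measurable_const, setLIntegral_const, add_mul, add_assoc,
          mul_comm (Q A)]

theorem ae_le_mul_exp_of_le_add_condExp (hE : MeasurableSet E) (hb : 0 ≤ b) (hk : 0 ≤ k)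
    (hβ_nonneg : ∀ s ∈ E, 0 ≤ β s) (hβ_int : IntegrableOn β E)
    (hψ_nonneg : ∀ x, 0 ≤ x → 0 ≤ ψ x) (hψ_growth : ∀ x, 0 ≤ x → ψ x ≤ k * (1 + x))
    (hu_nonneg : ∀ t ω, 0 ≤ u t ω) (hu_prog : IsStronglyProgressive ℱ u)
    (hu_sup : ∫⁻ ω, (⨆ t ∈ E, ENNReal.ofReal (u t ω)) ∂Q < ⊤)
    (hmain : ∀ t ∈ E, ∀ᵐ ω ∂Q,
      u t ω ≤ b + Q[fun ω' ↦ ∫ s in Ioi t ∩ E, β s * ψ (u s ω') | ℱ t] ω)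
    {t : ℝ} (ht : t ∈ E) :
    ∀ᵐ ω ∂Q, u t ω ≤ (b + k * ∫ s in E, β s) * Real.exp (k * ∫ s in E, β s) := by
  set B := ∫ s in E, β s
  have hB : 0 ≤ k * B := mul_nonneg hk (setIntegral_nonneg hE hβ_nonneg)
  set ν := (volume.restrict E).withDensity fun r ↦ ENNReal.ofReal (k * β r)
  have hν_univ : ν univ = ENNReal.ofReal (k * B) := by
    rw [withDensity_apply _ MeasurableSet.univ, Measure.restrict_univ, ← integral_const_mul,
      ofReal_integral_eq_lintegral_ofReal (hβ_int.const_mul k)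
        ((ae_restrict_iff' hE).mpr (ae_of_all _ fun s hs ↦ mul_nonneg hk (hβ_nonneg s hs)))]
  have : IsFiniteMeasure ν := ⟨by simp [hν_univ]⟩
  have hνE : ∀ᵐ r ∂ν, r ∈ E := withDensity_absolutelyContinuous _ _ |>.ae_le (ae_restrict_mem hE)
  have hν_le (s : ℝ) : ν (Ioi s) ≤ ENNReal.ofReal (k * B) := hν_univ ▸ measure_mono (subset_univ _)
  have hu_meas : Measurable fun p : ℝ × Ω ↦ u p.1 p.2 :=
    hu_prog.stronglyMeasurable_uncurry.measurable
  set A := {ω | (b + k * B) * Real.exp (k * B) < u t ω}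
  have hA : MeasurableSet[ℱ t] A :=
    measurableSet_lt measurable_const (hu_prog.stronglyAdapted t).measurable
  have hrec (s : ℝ) (hs : s ∈ E) (hts : t ≤ s) :
      ∫⁻ ω in A, ENNReal.ofReal (u s ω) ∂Q ≤ ENNReal.ofReal (b + k * B) * Q A
        + ∫⁻ r in Ioi s, ∫⁻ ω in A, ENNReal.ofReal (u r ω) ∂Q ∂ν := by
    refine (setLIntegral_ofReal_le_add_lintegral_Ioi hu_meas
      (ae_of_all _ fun ω ↦ setIntegral_nonneg (measurableSet_Ioi.inter hE) fun r hr ↦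
        mul_nonneg (hβ_nonneg r hr.2) (hψ_nonneg _ (hu_nonneg r ω)))
      (fun ω ↦ ofReal_setIntegral_mul_le_setLIntegral_withDensity hE hk hβ_nonneg
        hβ_int.aemeasurable hψ_nonneg hψ_growth (hu_nonneg · ω) measurableSet_Ioi)
      (hmain s hs) (ℱ.mono hts _ hA)).trans ?_
    rw [ENNReal.ofReal_add hb hB]
    gcongr
    exact hν_le s
  have hbdd (s : ℝ) (hs : s ∈ E) (_ : t ≤ s) :
      ∫⁻ ω in A, ENNReal.ofReal (u s ω) ∂Q ≤ ∫⁻ ω, (⨆ t ∈ E, ENNReal.ofReal (u t ω)) ∂Q :=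
    (setLIntegral_le_lintegral _ _).trans
      (lintegral_mono fun ω ↦ le_biSup (fun t ↦ ENNReal.ofReal (u t ω)) hs)
  have hzt := le_mul_exp_of_le_add_lintegral_Ioi hνE hu_sup.ne ht hbdd hrec
  refine ae_le_of_setLIntegral_le (f := u t) (hu_meas.comp measurable_prodMk_left)
    (mul_nonneg (add_nonneg hb hB) (Real.exp_nonneg _)) (hzt.trans ?_)
  rw [ENNReal.ofReal_mul (add_nonneg hb hB), mul_right_comm]
  gcongr
  exact ENNReal.toReal_le_of_le_ofReal hB (hν_le t)

end IntegratedInequality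

lemma measurableSet_timeSet (T : EReal) : MeasurableSet (timeSet T) :=
  measurableSet_Ici.inter (measurable_coe_real_ereal measurableSet_Iic)

theorem lemma_2_1_uniform_bound_general
    {Ω : Type*} {m0 : MeasurableSpace Ω} (P : Measure Ω) [IsProbabilityMeasure P]
    (ℱ : Filtration ℝ m0)
    (T : EReal)
    (b : ℕ → ℝ)
    (hb_nonneg : ∀ n, 1 ≤ n → 0 ≤ b n)
    (hb_antitone : ∀ n, 1 ≤ n → b (n + 1) ≤ b n)
    (β : ℝ → ℝ)
    (hβ_nonneg : ∀ s ∈ timeSet T, 0 ≤ β s)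
    (hβ_int : IntegrableOn β (timeSet T))
    (ψ : ℝ → ℝ) (k : ℝ) (hk : 0 < k)
    (hψ_nonneg : ∀ x, 0 ≤ x → 0 ≤ ψ x)
    (hψ_growth : ∀ x, 0 ≤ x → ψ x ≤ k * (1 + x))
    (Pn : ℕ → Measure Ω)
    (hPn_prob : ∀ n, IsProbabilityMeasure (Pn n))
    (hPn_equiv : ∀ n, Pn n ≪ P ∧ P ≪ Pn n)
    (u : ℕ → ℝ → Ω → ℝ)
    (hu_nonneg : ∀ n t ω, 0 ≤ u n t ω)
    (hu_prog : ∀ n, ProgMeasurable ℱ (fun t ω => u n t ω))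
    (hu_sup : ∀ n, 1 ≤ n →
      ∫⁻ ω, (⨆ t ∈ timeSet T, ENNReal.ofReal (u n t ω)) ∂(Pn n) < ⊤)
    (hmain : ∀ n, 1 ≤ n → ∀ t ∈ timeSet T, ∀ᵐ ω ∂P,
      u n t ω ≤ b n +
        ((Pn n)[fun ω' => ∫ s in Ioi t ∩ timeSet T, β s * ψ (u n s ω') | ℱ t]) ω) :
    ∀ t ∈ timeSet T, ∀ᵐ ω ∂P, ∀ n, 1 ≤ n →
      u n t ω ≤ (b 1 + k * ∫ s in timeSet T, β s) *
        Real.exp (k * ∫ s in timeSet T, β s) := by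
  intro t ht
  have hb_le (n : ℕ) (hn : 1 ≤ n) : b n ≤ b 1 := by
    induction n, hn using Nat.le_induction with
    | base => rfl
    | succ n hn ih => exact (hb_antitone n hn).trans ih
  refine ae_all_iff.mpr fun n ↦ eventually_imp_distrib_left.mpr fun hn ↦ ?_
  have := hPn_prob n
  have hQ := ae_le_mul_exp_of_le_add_condExp (ℱ := ℱ) (measurableSet_timeSet T) (hb_nonneg n hn)
    hk.le hβ_nonneg hβ_int hψ_nonneg hψ_growth (hu_nonneg n) (hu_prog n) (hu_sup n hn)
    (fun s hs ↦ (hPn_equiv n).1.ae_le (hmain n hn s hs)) ht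
  filter_upwards [(hPn_equiv n).2.ae_le hQ] with ω hω
  exact hω.trans (by gcongr; exact hb_le n hn)

/-- **Uniform bound (5) in the proof of Lemma 2.1.** Under the hypotheses of Lemma 2.1
(without the Osgood condition and without `b_n → 0`), one has, for each `t ∈ [0,T]`,
`sup_{n ≥ 1} u_n(t) ≤ (b₁ + k ∫₀^T β(s) ds) · exp(k ∫₀^T β(s) ds)` `P`-a.s. -/
theorem lemma_2_1_uniform_bound
    {Ω : Type*} {m0 : MeasurableSpace Ω} (P : Measure Ω) [IsProbabilityMeasure P]
    (hPcomplete : P.IsComplete)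
    (ℱ : Filtration ℝ m0)
    (T : EReal) (hT : 0 < T)
    (b : ℕ → ℝ)
    (hb_nonneg : ∀ n, 1 ≤ n → 0 ≤ b n)
    (hb_antitone : ∀ n, 1 ≤ n → b (n + 1) ≤ b n)
    (β : ℝ → ℝ)
    (hβ_nonneg : ∀ s ∈ timeSet T, 0 ≤ β s)
    (hβ_int : IntegrableOn β (timeSet T))
    (ψ : ℝ → ℝ) (k : ℝ) (hk : 0 < k)
    (hψ_nonneg : ∀ x, 0 ≤ x → 0 ≤ ψ x)
    (hψ_mono : MonotoneOn ψ (Ici 0))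
    (hψ_cont : ContinuousOn ψ (Ici 0))
    (hψ_growth : ∀ x, 0 ≤ x → ψ x ≤ k * (1 + x))
    (Pn : ℕ → Measure Ω)
    (hPn_prob : ∀ n, IsProbabilityMeasure (Pn n))
    (hPn_equiv : ∀ n, Pn n ≪ P ∧ P ≪ Pn n)
    (u : ℕ → ℝ → Ω → ℝ)
    (hu_nonneg : ∀ n t ω, 0 ≤ u n t ω)
    (hu_prog : ∀ n, ProgMeasurable ℱ (fun t ω => u n t ω))
    (hu_sup : ∀ n, 1 ≤ n →
      ∫⁻ ω, (⨆ t ∈ timeSet T, ENNReal.ofReal (u n t ω)) ∂(Pn n) < ⊤)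
    (hmain : ∀ n, 1 ≤ n → ∀ t ∈ timeSet T, ∀ᵐ ω ∂P,
      u n t ω ≤ b n +
        ((Pn n)[fun ω' => ∫ s in Ioi t ∩ timeSet T, β s * ψ (u n s ω') | ℱ t]) ω) :
    ∀ t ∈ timeSet T, ∀ᵐ ω ∂P, ∀ n, 1 ≤ n →
      u n t ω ≤ (b 1 + k * ∫ s in timeSet T, β s) *
        Real.exp (k * ∫ s in timeSet T, β s) :=
  lemma_2_1_uniform_bound_general P ℱ T b hb_nonneg hb_antitone β hβ_nonneg hβ_int ψ k hk hψ_nonneg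
    hψ_growth Pn hPn_prob hPn_equiv u hu_nonneg hu_prog hu_sup hmain
end
end

section
/- Let u ∈ L¹([0,T];ℝ₊) and let l:ℝ→(0,+∞) be a continuous function belonging to the class LS. Then for all real numbers a ≤ 0 ≤ b, the backward integral equations L_t = a − ∫_t^T u(s) l(L_s) ds and U_t = b + ∫_t^T u(s) l(U_s) ds each have a unique bounded continuous solution L, U : [0,T] → ℝ, and these solutions satisfy L_0 ≤ L_t ≤ a ≤ 0 ≤ b ≤ U_t ≤ U_0 for every t ∈ [0,T]. (Lemma 3.1, sufficiency direction.) -/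
open MeasureTheory Set Filter Topology

noncomputable section

/-!
Put `E x = ∫ z in b..x, 1 / l z`. The `LS` condition makes `E` an increasing bijection of `ℝ`,
and `E⁻¹` solves the autonomous equation `y' = l (y)`. The backward equation
`U t = b + c ∫_t^T u s l (U s) ds` then separates: for every bounded continuous solution, the chain
rule for the absolutely continuous function `t ↦ U t` gives `E (U t) = c ∫_t^T u`, which forces
`U t = E⁻¹ (c ∫_t^T u)`; conversely this function is a solution. Monotonicity of `E⁻¹` and of
`t ↦ ∫_t^T u` gives the bounds, and `L`, `U` are the cases `c = -1` and `c = 1`.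
-/

theorem LipschitzOnWith.comp_absolutelyContinuousOnInterval {X Y : Type*} [PseudoMetricSpace X]
    [PseudoMetricSpace Y] {F : ℝ → X} {Φ : X → Y} {a b : ℝ} {s : Set X} {K : NNReal} (hΦ : LipschitzOnWith K Φ s)
    (hF : AbsolutelyContinuousOnInterval F a b) (hFs : MapsTo F (uIcc a b) s) :
    AbsolutelyContinuousOnInterval (Φ ∘ F) a b := by
  rw [absolutelyContinuousOnInterval_iff] at hF ⊢
  intro ε hε
  obtain ⟨δ, hδ, hFδ⟩ := hF (ε / (K + 1)) (by positivity)
  refine ⟨δ, hδ, fun E hE hEδ => ?_⟩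
  calc ∑ i ∈ Finset.range E.1, dist (Φ (F (E.2 i).1)) (Φ (F (E.2 i).2))
      ≤ ∑ i ∈ Finset.range E.1, K * dist (F (E.2 i).1) (F (E.2 i).2) :=
        Finset.sum_le_sum fun i hi =>
          hΦ.dist_le_mul _ (hFs (hE.1 i hi).1) _ (hFs (hE.1 i hi).2)
    _ = K * ∑ i ∈ Finset.range E.1, dist (F (E.2 i).1) (F (E.2 i).2) := (Finset.mul_sum ..).symm
    _ ≤ K * (ε / (K + 1)) := by gcongr; exact (hFδ E hE hEδ).le
    _ < ε := by
        rw [mul_div_assoc', div_lt_iff₀ (by positivity)]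
        nlinarith

theorem intervalIntegral.integral_comp_add_primitive_mul {g Φ φ : ℝ → ℝ} {a b : ℝ}
    (hg : IntervalIntegrable g volume a b) (hΦ : ∀ x, HasDerivAt Φ (φ x) x)
    (hφ : Continuous φ) (y₀ : ℝ) :
    ∫ x in a..b, φ (y₀ + ∫ t in a..x, g t) * g x = Φ (y₀ + ∫ t in a..b, g t) - Φ y₀ := by
  set F : ℝ → ℝ := fun x => y₀ + ∫ t in a..x, g t with hF
  have hF_ac : AbsolutelyContinuousOnInterval F a b :=
    (LipschitzWith.const y₀).lipschitzOnWith.absolutelyContinuousOnInterval.add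
      (hg.absolutelyContinuousOnInterval_intervalIntegral left_mem_uIcc)
  obtain ⟨C, hC⟩ := hF_ac.exists_bound
  have hΦ_C1 : ContDiff ℝ 1 Φ := contDiff_one_iff_deriv.2
    ⟨fun x => (hΦ x).differentiableAt, by simpa [funext fun x => (hΦ x).deriv] using hφ⟩
  obtain ⟨K, hK⟩ := hΦ_C1.contDiffOn.exists_lipschitzOnWith (s := Icc (-C) C) one_ne_zero
    (convex_Icc _ _) isCompact_Icc
  have hΨ_ac := hK.comp_absolutelyContinuousOnInterval hF_ac fun x hx => abs_le.1 (hC x hx)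
  have hFa : F a = y₀ := by simp [hF]
  calc ∫ x in a..b, φ (F x) * g x = ∫ x in a..b, deriv (Φ ∘ F) x := by
        refine intervalIntegral.integral_congr_ae ?_
        filter_upwards [hg.ae_hasDerivAt_integral] with x hx hxab
        have hFx : HasDerivAt F (g x) x :=
          (hx (uIoc_subset_uIcc hxab) a left_mem_uIcc).const_add y₀
        exact ((hΦ (F x)).comp x hFx).deriv.symm
    _ = Φ (F b) - Φ y₀ := by
        rw [hΨ_ac.integral_deriv_eq_sub, Function.comp_apply, Function.comp_apply, hFa]

theorem sub_eq_mul_intervalIntegral_of_eq_add_integral {E l f U : ℝ → ℝ} {c t r : ℝ}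
    (hl : Continuous l) (hl0 : ∀ x, l x ≠ 0) (hE : ∀ x, HasDerivAt E (l x)⁻¹ x)
    (hfU : IntervalIntegrable (fun s => f s * l (U s)) volume t r)
    (hU : ∀ x ∈ uIcc t r, U x = U t + c * ∫ s in t..x, f s * l (U s)) :
    E (U r) - E (U t) = c * ∫ s in t..r, f s := by
  have key := intervalIntegral.integral_comp_add_primitive_mul (hfU.const_mul c) hE
    (hl.inv₀ hl0) (U t)
  simp only [intervalIntegral.integral_const_mul, ← hU r right_mem_uIcc] at key
  rw [← key, ← intervalIntegral.integral_const_mul]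
  refine intervalIntegral.integral_congr fun x hx => ?_
  rw [← hU x hx]
  field_simp [hl0 (U x)]

theorem monotone_intervalIntegral_of_nonneg {g : ℝ → ℝ} (hg : Continuous g) (hg0 : ∀ x, 0 ≤ g x)
    (c : ℝ) : Monotone fun x => ∫ z in c..x, g z := fun x y hxy => by
  rw [← sub_nonneg, intervalIntegral.integral_interval_sub_left (hg.intervalIntegrable _ _)
    (hg.intervalIntegrable _ _)]
  exact intervalIntegral.integral_nonneg hxy fun z _ => hg0 z

theorem tendsto_intervalIntegral_atTop_of_lintegral_Ici_eq_top {g : ℝ → ℝ} (hg : Continuous g)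
    (hg0 : ∀ x, 0 ≤ g x) {a : ℝ} (h : ∫⁻ x in Ici a, ENNReal.ofReal (g x) = ⊤) (c : ℝ) :
    Tendsto (fun x => ∫ z in c..x, g z) atTop atTop := by
  refine tendsto_atTop_atTop_of_monotone' (monotone_intervalIntegral_of_nonneg hg hg0 c) ?_
  rintro ⟨B, hB⟩
  have hint : IntegrableOn g (Ioi a) := by
    refine integrableOn_Ioi_of_intervalIntegral_norm_bounded (B - ∫ z in c..a, g z) a
      (fun _ => hg.integrableOn_Ioc) tendsto_id (Eventually.of_forall fun x => ?_)
    simp only [Real.norm_eq_abs, abs_of_nonneg (hg0 _), id]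
    rw [← intervalIntegral.integral_interval_sub_left (hg.intervalIntegrable c x)
      (hg.intervalIntegrable c a)]
    exact sub_le_sub_right (hB ⟨x, rfl⟩) _
  exact ((integrableOn_Ici_iff_integrableOn_Ioi).2 hint).lintegral_lt_top.ne h

theorem tendsto_intervalIntegral_atBot_of_lintegral_Iic_eq_top {g : ℝ → ℝ} (hg : Continuous g)
    (hg0 : ∀ x, 0 ≤ g x) {a : ℝ} (h : ∫⁻ x in Iic a, ENNReal.ofReal (g x) = ⊤) (c : ℝ) :
    Tendsto (fun x => ∫ z in c..x, g z) atBot atBot := by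
  refine tendsto_atBot_atBot_of_monotone' (monotone_intervalIntegral_of_nonneg hg hg0 c) ?_
  rintro ⟨B, hB⟩
  have hint : IntegrableOn g (Iic a) := by
    refine integrableOn_Iic_of_intervalIntegral_norm_bounded ((∫ z in c..a, g z) - B) a
      (fun _ => hg.integrableOn_Ioc) tendsto_id (Eventually.of_forall fun x => ?_)
    simp only [Real.norm_eq_abs, abs_of_nonneg (hg0 _), id]
    rw [← intervalIntegral.integral_interval_sub_left (hg.intervalIntegrable c a)
      (hg.intervalIntegrable c x)]
    exact sub_le_sub_left (hB ⟨x, rfl⟩) _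
  exact hint.lintegral_lt_top.ne h

theorem exists_orderIso_hasDerivAt_inv {l : ℝ → ℝ} (hl_cont : Continuous l)
    (hl_pos : ∀ x, 0 < l x)
    (hl_LS_neg : ∫⁻ x in Iic (0 : ℝ), ENNReal.ofReal (1 / l x) = ⊤)
    (hl_LS_pos : ∫⁻ x in Ici (0 : ℝ), ENNReal.ofReal (1 / l x) = ⊤) (b : ℝ) :
    ∃ E : ℝ ≃o ℝ, E b = 0 ∧ (∀ x, HasDerivAt E (l x)⁻¹ x) ∧
      ∀ y, HasDerivAt E.symm (l (E.symm y)) y := by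
  simp only [one_div] at hl_LS_neg hl_LS_pos
  have hg : Continuous fun x => (l x)⁻¹ := hl_cont.inv₀ fun x => (hl_pos x).ne'
  have hg0 : ∀ x, 0 ≤ (l x)⁻¹ := fun x => (inv_pos.2 (hl_pos x)).le
  set G : ℝ → ℝ := fun x => ∫ z in b..x, (l z)⁻¹
  have hG : ∀ x, HasDerivAt G (l x)⁻¹ x := fun x =>
    intervalIntegral.integral_hasDerivAt_right (hg.intervalIntegrable b x)
      hg.stronglyMeasurable.stronglyMeasurableAtFilter hg.continuousAt
  have hG_mono : StrictMono G :=
    strictMono_of_deriv_pos fun x => by rw [(hG x).deriv]; exact inv_pos.2 (hl_pos x)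
  have hG_surj : Function.Surjective G :=
    (continuous_iff_continuousAt.2 fun x => (hG x).continuousAt).surjective
      (tendsto_intervalIntegral_atTop_of_lintegral_Ici_eq_top hg hg0 hl_LS_pos b)
      (tendsto_intervalIntegral_atBot_of_lintegral_Iic_eq_top hg hg0 hl_LS_neg b)
  set E := hG_mono.orderIsoOfSurjective G hG_surj
  refine ⟨E, intervalIntegral.integral_same, hG, fun y => ?_⟩
  simpa using (hG (E.symm y)).of_local_left_inverse E.symm.continuous.continuousAt
    (inv_ne_zero (hl_pos _).ne') (Eventually.of_forall E.apply_symm_apply)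

theorem continuous_integral_Ioi {f : ℝ → ℝ} (hf : Integrable f) :
    Continuous fun t => ∫ s in Ioi t, f s := by
  have h : ∀ t, ∫ s in Ioi t, f s = (∫ s in Ioi 0, f s) - ∫ s in (0 : ℝ)..t, f s := fun t => by
    rw [← intervalIntegral.integral_Ioi_sub_Ioi' hf.integrableOn hf.integrableOn, sub_sub_cancel]
  exact (continuous_const.sub
    (intervalIntegral.continuous_primitive (fun _ _ => hf.intervalIntegrable) 0)).congr
    fun t => (h t).symm

section ExplicitSolution

variable {l Φ f U : ℝ → ℝ} {c : ℝ}

theorem sub_eq_mul_intervalIntegral_of_hasDerivAt (hl : Continuous l)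
    (hΦ : ∀ y, HasDerivAt Φ (l (Φ y)) y) (hf : Integrable f)
    (hU : U = fun t => Φ (c * ∫ s in Ioi t, f s)) (t r : ℝ) :
    U t - U r = c * ∫ s in t..r, f s * l (U s) := by
  subst hU
  beta_reduce
  have hΦc : Continuous Φ :=
    (show Differentiable ℝ Φ from fun y => (hΦ y).differentiableAt).continuous
  have hshift :
      ∀ x, c * (∫ s in Ioi t, f s) + ∫ s in t..x, -(c * f s) = c * ∫ s in Ioi x, f s :=
    fun x => by
      have : (∫ s in Ioi t, f s) - ∫ s in Ioi x, f s = ∫ s in t..x, f s :=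
        intervalIntegral.integral_Ioi_sub_Ioi' hf.integrableOn hf.integrableOn
      rw [intervalIntegral.integral_neg, intervalIntegral.integral_const_mul]
      linear_combination c * this
  have := intervalIntegral.integral_comp_add_primitive_mul (g := fun s => -(c * f s)) (a := t)
    (b := r) (hf.intervalIntegrable.const_mul c).neg hΦ (hl.comp hΦc) (c * ∫ s in Ioi t, f s)
  simp only [hshift] at this
  rw [← neg_sub, ← this, ← intervalIntegral.integral_const_mul, ← intervalIntegral.integral_neg]
  congr 1 with s
  ring

theorem eq_add_mul_integral_Ioi_of_hasDerivAt (hl : Continuous l)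
    (hΦ : ∀ y, HasDerivAt Φ (l (Φ y)) y) (hf : Integrable f)
    (hU : U = fun t => Φ (c * ∫ s in Ioi t, f s)) :
    Continuous U ∧ ∀ t, U t = Φ 0 + c * ∫ s in Ioi t, f s * l (U s) := by
  have hΦc : Continuous Φ :=
    (show Differentiable ℝ Φ from fun y => (hΦ y).differentiableAt).continuous
  have hUc : Continuous U := hU ▸ hΦc.comp (continuous_const.mul (continuous_integral_Ioi hf))
  obtain ⟨K, hK⟩ := isCompact_Icc.exists_bound_of_continuousOn (s := Icc (-(|c| * ∫ s, ‖f s‖))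
    (|c| * ∫ s, ‖f s‖)) (hl.comp hΦc).continuousOn
  have hlU : ∀ s, ‖l (U s)‖ ≤ K := fun s => by
    refine hU ▸ hK _ (abs_le.1 ?_)
    rw [abs_mul]
    gcongr
    exact (norm_integral_le_integral_norm _).trans
      (setIntegral_le_integral hf.norm (Eventually.of_forall fun _ => norm_nonneg _))
  have hint : Integrable fun s => f s * l (U s) :=
    hf.mul_bdd (hl.comp hUc).aestronglyMeasurable (Eventually.of_forall hlU)
  have hv_lim : Tendsto (fun t => c * ∫ s in Ioi t, f s) atTop (𝓝 0) := by
    simpa using (tendsto_integral_Ioi_zero (f := f) (μ := volume) tendsto_id).const_mul c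
  have hU_lim : Tendsto U atTop (𝓝 (Φ 0)) := hU ▸ (hΦc.tendsto 0).comp hv_lim
  refine ⟨hUc, fun t => ?_⟩
  have hint_lim :=
    (intervalIntegral_tendsto_integral_Ioi t hint.integrableOn tendsto_id).const_mul c
  refine tendsto_nhds_unique tendsto_const_nhds ((hU_lim.add hint_lim).congr fun r => ?_)
  rw [id, ← sub_eq_mul_intervalIntegral_of_hasDerivAt hl hΦ hf hU t r]
  ring

theorem eq_add_mul_setIntegral_Ioi_inter_of_hasDerivAt {S : Set ℝ} (hS : MeasurableSet S)
    {u : ℝ → ℝ} (hl : Continuous l) (hΦ : ∀ y, HasDerivAt Φ (l (Φ y)) y) (hu : IntegrableOn u S) (hU : U = fun t => Φ (c * ∫ s in Ioi t ∩ S, u s)) :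
    Continuous U ∧ ∀ t, U t = Φ 0 + c * ∫ s in Ioi t ∩ S, u s * l (U s) := by
  have hf : Integrable (S.indicator u) := (integrable_indicator_iff hS).2 hu
  have hU' : U = fun t => Φ (c * ∫ s in Ioi t, S.indicator u s) := by
    simp only [hU, setIntegral_indicator hS]
  obtain ⟨hUc, hUeq⟩ := eq_add_mul_integral_Ioi_of_hasDerivAt hl hΦ hf hU'
  refine ⟨hUc, fun t => ?_⟩
  rw [hUeq t, ← setIntegral_indicator hS]
  simp only [indicator_mul_left]

end ExplicitSolution

theorem timeSet_ordConnected (T : EReal) : (timeSet T).OrdConnected :=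
  ⟨fun _ ht _ hr _ hx => ⟨ht.1.trans hx.1, (EReal.coe_le_coe_iff.2 hx.2).trans hr.2⟩⟩

theorem exists_tendsto_setIntegral_Ioi_inter_timeSet {T : EReal} {t : ℝ} (ht : t ∈ timeSet T) :
    ∃ F : Filter ℝ, F.NeBot ∧ (∀ᶠ r in F, r ∈ timeSet T ∧ t ≤ r) ∧
      ∀ g : ℝ → ℝ, Tendsto (fun r => ∫ s in Ioi r ∩ timeSet T, g s) F (𝓝 0) := by
  induction T using EReal.rec with
  | bot => exact absurd ht.2 (by simp)
  | coe T =>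
    have htT : t ≤ T := EReal.coe_le_coe_iff.1 ht.2
    refine ⟨pure T, inferInstance, eventually_pure.2 ⟨⟨ht.1.trans htT, le_rfl⟩, htT⟩, fun g => ?_⟩
    have hempty : Ioi T ∩ timeSet T = ∅ :=
      eq_empty_of_forall_notMem fun s hs => (EReal.coe_le_coe_iff.1 hs.2.2).not_gt hs.1
    simpa [hempty] using tendsto_pure_nhds (fun r => ∫ s in Ioi r ∩ timeSet T, g s) T
  | top =>
    have hIoi : ∀ r, 0 ≤ r → Ioi r ∩ timeSet ⊤ = Ioi r := fun r hr =>
      inter_eq_left.2 fun s hs => ⟨hr.trans (le_of_lt hs), le_top⟩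
    refine ⟨atTop, inferInstance, ?_, fun g => ?_⟩
    · filter_upwards [eventually_ge_atTop (max 0 t)] with r hr
      exact ⟨⟨(le_max_left _ _).trans hr, le_top⟩, (le_max_right _ _).trans hr⟩
    · refine (tendsto_integral_Ioi_zero (f := g) (μ := volume) tendsto_id).congr' ?_
      filter_upwards [eventually_ge_atTop 0] with r hr
      rw [id, hIoi r hr]

theorem setIntegral_Ioi_inter_sub_setIntegral_Ioi_inter {S : Set ℝ} (hS : MeasurableSet S)
    {g : ℝ → ℝ} (hg : IntegrableOn g S) {t r : ℝ} (htr : t ≤ r) (hIcc : Icc t r ⊆ S) :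
    (∫ s in Ioi t ∩ S, g s) - ∫ s in Ioi r ∩ S, g s = ∫ s in t..r, g s := by
  have hgS : Integrable (S.indicator g) := (integrable_indicator_iff hS).2 hg
  simp only [← setIntegral_indicator hS]
  rw [intervalIntegral.integral_Ioi_sub_Ioi' hgS.integrableOn hgS.integrableOn,
    intervalIntegral.integral_of_le htr, intervalIntegral.integral_of_le htr,
    setIntegral_indicator hS, inter_eq_left.2 (Ioc_subset_Icc_self.trans hIcc)]

theorem apply_eq_mul_setIntegral_of_solution {T : EReal} {E l u U : ℝ → ℝ} {b c : ℝ}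
    (hl : Continuous l) (hl0 : ∀ x, l x ≠ 0) (hE : ∀ x, HasDerivAt E (l x)⁻¹ x) (hEb : E b = 0)
    (hu : IntegrableOn u (timeSet T)) (hUc : ContinuousOn U (timeSet T))
    (hUb : ∃ M, ∀ t ∈ timeSet T, |U t| ≤ M)
    (hU : ∀ t ∈ timeSet T, U t = b + c * ∫ s in Ioi t ∩ timeSet T, u s * l (U s))
    {t : ℝ} (ht : t ∈ timeSet T) : E (U t) = c * ∫ s in Ioi t ∩ timeSet T, u s := by
  set S := timeSet T
  have hS : MeasurableSet S := (timeSet_ordConnected T).measurableSet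
  have hIcc : ∀ r ∈ S, Icc t r ⊆ S := fun r hr => (timeSet_ordConnected T).out ht hr
  obtain ⟨M, hM⟩ := hUb
  obtain ⟨K, hK⟩ := isCompact_Icc.exists_bound_of_continuousOn (s := Icc (-M) M) hl.continuousOn
  have hulU : IntegrableOn (fun s => u s * l (U s)) S :=
    hu.mul_bdd ((hl.comp_continuousOn hUc).aestronglyMeasurable hS)
      ((ae_restrict_iff' hS).2 (Eventually.of_forall fun s hs => hK _ (abs_le.1 (hM s hs))))
  have hconst : ∀ r ∈ S, t ≤ r → E (U t) - c * (∫ s in Ioi t ∩ S, u s) =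
      E (U r) - c * ∫ s in Ioi r ∩ S, u s := by
    intro r hr htr
    have hsep := sub_eq_mul_intervalIntegral_of_eq_add_integral (c := -c) hl hl0 hE
      ((intervalIntegrable_iff_integrableOn_Ioc_of_le htr).2
        (hulU.mono_set (Ioc_subset_Icc_self.trans (hIcc r hr))))
      fun x hx => by
        rw [uIcc_of_le htr] at hx
        have hxS : x ∈ S := hIcc r hr hx
        have := setIntegral_Ioi_inter_sub_setIntegral_Ioi_inter hS hulU hx.1
          ((Icc_subset_Icc_right hx.2).trans (hIcc r hr))
        linear_combination hU x hxS - hU t ht - c * this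
    linear_combination -hsep - c * setIntegral_Ioi_inter_sub_setIntegral_Ioi_inter hS hu htr
      (hIcc r hr)
  obtain ⟨F, hF, hFS, hF0⟩ := exists_tendsto_setIntegral_Ioi_inter_timeSet ht
  have hEc : Continuous E :=
    (show Differentiable ℝ E from fun x => (hE x).differentiableAt).continuous
  have hU_lim : Tendsto U F (𝓝 b) := by
    have h := ((hF0 fun s => u s * l (U s)).const_mul c).const_add b
    rw [mul_zero, add_zero] at h
    refine h.congr' ?_
    filter_upwards [hFS] with r hr
    exact (hU r hr.1).symm
  have hlim : Tendsto (fun r => E (U r) - c * ∫ s in Ioi r ∩ S, u s) F (𝓝 0) := by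
    simpa [hEb] using ((hEc.tendsto b).comp hU_lim).sub ((hF0 u).const_mul c)
  have hlim' : Tendsto (fun r => E (U r) - c * ∫ s in Ioi r ∩ S, u s) F
      (𝓝 (E (U t) - c * ∫ s in Ioi t ∩ S, u s)) :=
    tendsto_const_nhds.congr' (hFS.mono fun r hr => hconst r hr.1 hr.2)
  linear_combination tendsto_nhds_unique hlim' hlim

theorem setIntegral_Ioi_inter_mem_Icc {S : Set ℝ} (hS : MeasurableSet S) {u : ℝ → ℝ}
    (hu0 : ∀ s ∈ S, 0 ≤ u s) (hu : IntegrableOn u S) {t : ℝ} (ht : 0 ≤ t) :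
    ∫ s in Ioi t ∩ S, u s ∈ Icc 0 (∫ s in Ioi 0 ∩ S, u s) :=
  ⟨setIntegral_nonneg (measurableSet_Ioi.inter hS) fun s hs => hu0 s hs.2,
    setIntegral_mono_set (hu.mono_set inter_subset_right)
      ((ae_restrict_iff' (measurableSet_Ioi.inter hS)).2
        (Eventually.of_forall fun s hs => hu0 s hs.2))
      (Eventually.of_forall (inter_subset_inter_left S (Ioi_subset_Ioi ht)))⟩

theorem exists_solution_timeSet {T : EReal} {u l : ℝ → ℝ}
    (hu_nonneg : ∀ s ∈ timeSet T, 0 ≤ u s) (hu_int : IntegrableOn u (timeSet T))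
    (hl_cont : Continuous l) (hl_pos : ∀ x, 0 < l x)
    (hl_LS_neg : ∫⁻ x in Iic (0 : ℝ), ENNReal.ofReal (1 / l x) = ⊤)
    (hl_LS_pos : ∫⁻ x in Ici (0 : ℝ), ENNReal.ofReal (1 / l x) = ⊤) (b c : ℝ) :
    ∃ U : ℝ → ℝ, ContinuousOn U (timeSet T) ∧ (∃ M, ∀ t ∈ timeSet T, |U t| ≤ M) ∧
      (∀ t ∈ timeSet T, U t = b + c * ∫ s in Ioi t ∩ timeSet T, u s * l (U s)) ∧
      (∀ U' : ℝ → ℝ, ContinuousOn U' (timeSet T) → (∃ M, ∀ t ∈ timeSet T, |U' t| ≤ M) →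
        (∀ t ∈ timeSet T, U' t = b + c * ∫ s in Ioi t ∩ timeSet T, u s * l (U' s)) →
        ∀ t ∈ timeSet T, U' t = U t) ∧
      ∀ t ∈ timeSet T, (0 ≤ c → b ≤ U t ∧ U t ≤ U 0) ∧ (c ≤ 0 → U 0 ≤ U t ∧ U t ≤ b) := by
  have hS : MeasurableSet (timeSet T) := (timeSet_ordConnected T).measurableSet
  obtain ⟨E, hEb, hE, hE_symm⟩ :=
    exists_orderIso_hasDerivAt_inv hl_cont hl_pos hl_LS_neg hl_LS_pos b
  have hE0 : E.symm 0 = b := E.symm_apply_eq.2 hEb.symm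
  set U := fun t => E.symm (c * ∫ s in Ioi t ∩ timeSet T, u s) with hU
  obtain ⟨hUc, hUeq⟩ := eq_add_mul_setIntegral_Ioi_inter_of_hasDerivAt hS hl_cont hE_symm hu_int hU
  have hbounds : ∀ t ∈ timeSet T,
      (0 ≤ c → b ≤ U t ∧ U t ≤ U 0) ∧ (c ≤ 0 → U 0 ≤ U t ∧ U t ≤ b) := by
    intro t ht
    obtain ⟨h0, hle⟩ := setIntegral_Ioi_inter_mem_Icc hS hu_nonneg hu_int ht.1
    rw [← hE0]
    exact ⟨fun hc => ⟨E.symm.monotone (by nlinarith), E.symm.monotone (by nlinarith)⟩,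
      fun hc => ⟨E.symm.monotone (by nlinarith), E.symm.monotone (by nlinarith)⟩⟩
  refine ⟨U, hUc.continuousOn, ⟨max |b| |U 0|, fun t ht => ?_⟩, fun t _ => by rw [hUeq t, hE0],
    fun U' hU'c hU'b hU'eq t ht => ?_, hbounds⟩
  · rcases le_total 0 c with hc | hc
    · exact abs_le_max_abs_abs ((hbounds t ht).1 hc).1 ((hbounds t ht).1 hc).2
    · exact max_comm |U 0| |b| ▸ abs_le_max_abs_abs ((hbounds t ht).2 hc).1 ((hbounds t ht).2 hc).2
  · exact (E.symm_apply_eq.2 (apply_eq_mul_setIntegral_of_solution hl_cont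
      (fun x => (hl_pos x).ne') hE hEb hu_int hU'c hU'b hU'eq ht).symm).symm

theorem lemma_3_1_sufficiency_general
    (T : EReal)
    (u : ℝ → ℝ)
    (hu_nonneg : ∀ s ∈ timeSet T, 0 ≤ u s)
    (hu_int : IntegrableOn u (timeSet T))
    (l : ℝ → ℝ) (hl_cont : Continuous l) (hl_pos : ∀ x, 0 < l x)
    (hl_LS_neg : ∫⁻ x in Iic (0 : ℝ), ENNReal.ofReal (1 / l x) = ⊤)
    (hl_LS_pos : ∫⁻ x in Ici (0 : ℝ), ENNReal.ofReal (1 / l x) = ⊤)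
    (a b : ℝ) :
    ∃ L U : ℝ → ℝ,
      ContinuousOn L (timeSet T) ∧ (∃ M, ∀ t ∈ timeSet T, |L t| ≤ M) ∧
      (∀ t ∈ timeSet T, L t = a - ∫ s in Ioi t ∩ timeSet T, u s * l (L s)) ∧
      ContinuousOn U (timeSet T) ∧ (∃ M, ∀ t ∈ timeSet T, |U t| ≤ M) ∧
      (∀ t ∈ timeSet T, U t = b + ∫ s in Ioi t ∩ timeSet T, u s * l (U s)) ∧
      (∀ L' : ℝ → ℝ, ContinuousOn L' (timeSet T) → (∃ M, ∀ t ∈ timeSet T, |L' t| ≤ M) →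
        (∀ t ∈ timeSet T, L' t = a - ∫ s in Ioi t ∩ timeSet T, u s * l (L' s)) →
        ∀ t ∈ timeSet T, L' t = L t) ∧
      (∀ U' : ℝ → ℝ, ContinuousOn U' (timeSet T) → (∃ M, ∀ t ∈ timeSet T, |U' t| ≤ M) →
        (∀ t ∈ timeSet T, U' t = b + ∫ s in Ioi t ∩ timeSet T, u s * l (U' s)) →
        ∀ t ∈ timeSet T, U' t = U t) ∧
      (∀ t ∈ timeSet T, L 0 ≤ L t ∧ L t ≤ a ∧ b ≤ U t ∧ U t ≤ U 0) := by
  obtain ⟨L, hLc, hLb, hLeq, hLuniq, hLbd⟩ :=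
    exists_solution_timeSet hu_nonneg hu_int hl_cont hl_pos hl_LS_neg hl_LS_pos a (-1)
  obtain ⟨U, hUc, hUb, hUeq, hUuniq, hUbd⟩ :=
    exists_solution_timeSet hu_nonneg hu_int hl_cont hl_pos hl_LS_neg hl_LS_pos b 1
  refine ⟨L, U, hLc, hLb, fun t ht => by rw [hLeq t ht]; ring, hUc, hUb,
    fun t ht => by rw [hUeq t ht]; ring,
    fun L' hL'c hL'b hL'eq => hLuniq L' hL'c hL'b fun t ht => by rw [hL'eq t ht]; ring,
    fun U' hU'c hU'b hU'eq => hUuniq U' hU'c hU'b fun t ht => by rw [hU'eq t ht]; ring,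
    fun t ht => ?_⟩
  obtain ⟨hL0, hLa⟩ := (hLbd t ht).2 (by norm_num)
  obtain ⟨hbU, hU0⟩ := (hUbd t ht).1 zero_le_one
  exact ⟨hL0, hLa, hbU, hU0⟩

/-- **Lemma 3.1, sufficiency direction.** If `u ∈ L¹([0,T];ℝ₊)` and `l : ℝ → (0,∞)` is a
continuous function of class `LS` (i.e. `∫_{-∞}^0 dx/l(x) = ∫_0^{+∞} dx/l(x) = +∞`), then for
all `a ≤ 0 ≤ b` the backward equations `L_t = a - ∫_t^T u(s) l(L_s) ds` and
`U_t = b + ∫_t^T u(s) l(U_s) ds` each have a unique bounded continuous solution on `[0,T]`,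
and these satisfy `L_0 ≤ L_t ≤ a ≤ 0 ≤ b ≤ U_t ≤ U_0` for all `t ∈ [0,T]`. -/
theorem lemma_3_1_sufficiency
    (T : EReal) (hT : 0 < T)
    (u : ℝ → ℝ)
    (hu_nonneg : ∀ s ∈ timeSet T, 0 ≤ u s)
    (hu_int : IntegrableOn u (timeSet T))
    (l : ℝ → ℝ) (hl_cont : Continuous l) (hl_pos : ∀ x, 0 < l x)
    (hl_LS_neg : ∫⁻ x in Iic (0 : ℝ), ENNReal.ofReal (1 / l x) = ⊤)
    (hl_LS_pos : ∫⁻ x in Ici (0 : ℝ), ENNReal.ofReal (1 / l x) = ⊤)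
    (a b : ℝ) (ha : a ≤ 0) (hb : 0 ≤ b) :
    ∃ L U : ℝ → ℝ,
      ContinuousOn L (timeSet T) ∧ (∃ M, ∀ t ∈ timeSet T, |L t| ≤ M) ∧
      (∀ t ∈ timeSet T, L t = a - ∫ s in Ioi t ∩ timeSet T, u s * l (L s)) ∧
      ContinuousOn U (timeSet T) ∧ (∃ M, ∀ t ∈ timeSet T, |U t| ≤ M) ∧
      (∀ t ∈ timeSet T, U t = b + ∫ s in Ioi t ∩ timeSet T, u s * l (U s)) ∧
      (∀ L' : ℝ → ℝ, ContinuousOn L' (timeSet T) → (∃ M, ∀ t ∈ timeSet T, |L' t| ≤ M) →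
        (∀ t ∈ timeSet T, L' t = a - ∫ s in Ioi t ∩ timeSet T, u s * l (L' s)) →
        ∀ t ∈ timeSet T, L' t = L t) ∧
      (∀ U' : ℝ → ℝ, ContinuousOn U' (timeSet T) → (∃ M, ∀ t ∈ timeSet T, |U' t| ≤ M) →
        (∀ t ∈ timeSet T, U' t = b + ∫ s in Ioi t ∩ timeSet T, u s * l (U' s)) →
        ∀ t ∈ timeSet T, U' t = U t) ∧
      (∀ t ∈ timeSet T, L 0 ≤ L t ∧ L t ≤ a ∧ b ≤ U t ∧ U t ≤ U 0) :=
  lemma_3_1_sufficiency_general T u hu_nonneg hu_int l hl_cont hl_pos hl_LS_neg hl_LS_pos a b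
end
end

section
/- Let β ∈ L¹([0,T];ℝ₊). For each n ≥ 1 let ψ_n:ℝ₊→ℝ₊ be Lipschitz continuous with ψ_{n+1}(x) ≤ ψ_n(x) for all x ≥ 0, and suppose ψ_n converges pointwise to a continuous function ψ:ℝ₊→ℝ₊. Let (b_n) be a nonincreasing sequence of nonnegative reals with b_n → 0, and for each n let v_n:[0,T]→ℝ₊ be the unique bounded continuous solution of v_n(t) = b_n + ∫_t^T β(s) ψ_n(v_n(s)) ds. Then v_{n+1}(t) ≤ v_n(t) for all n ≥ 1 and t ∈ [0,T], and the pointwise limit v(t) := lim_{n→∞} v_n(t) satisfies v(t) = ∫_t^T β(s) ψ(v(s)) ds for all t ∈ [0,T]. (Monotone-limit step in the proof of Lemma 2.1.) -/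
open MeasureTheory Set Filter Topology

noncomputable section

private lemma halving_step {A : Set ℝ} (hA : MeasurableSet A) {g u : ℝ → ℝ} {M a : ℝ}
    (hg : IntegrableOn g A)
    (hg0 : ∀ᵐ s ∂(volume.restrict A), 0 ≤ g s)
    (hgu : IntegrableOn (fun s => g s * u s) A)
    (hu0 : ∀ t ∈ A, 0 ≤ u t) (huM : ∀ t ∈ A, u t ≤ M)
    (hhalf : ∫ s in Set.Ioi a ∩ A, g s ≤ 1/2)
    (key : ∀ t ∈ A, a ≤ t → u t ≤ ∫ s in Set.Ioi t ∩ A, g s * u s) :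
    ∀ t ∈ A, a ≤ t → u t = 0 := by
  have claim : ∀ m : ℕ, ∀ t ∈ A, a ≤ t → u t ≤ M / 2 ^ m := by
    intro m
    induction m with
    | zero => intro t ht _; simpa using huM t ht
    | succ m ih =>
      intro t ht hat
      have hM0 : 0 ≤ M := le_trans (hu0 t ht) (huM t ht)
      have hsub : Set.Ioi t ∩ A ⊆ A := inter_subset_right
      have hg0' : ∀ᵐ s ∂(volume.restrict (Set.Ioi t ∩ A)), 0 ≤ g s :=
        ae_restrict_of_ae_restrict_of_subset hsub hg0
      have h1 : u t ≤ ∫ s in Set.Ioi t ∩ A, g s * u s := key t ht hat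
      have h2 : ∫ s in Set.Ioi t ∩ A, g s * u s ≤ ∫ s in Set.Ioi t ∩ A, g s * (M / 2 ^ m) := by
        apply integral_mono_ae (hgu.mono_set hsub) ((hg.mono_set hsub).mul_const _)
        filter_upwards [hg0', ae_restrict_mem (measurableSet_Ioi.inter hA)] with s hgs hs
        exact mul_le_mul_of_nonneg_left (ih s hs.2 (le_trans hat (le_of_lt hs.1))) hgs
      have h3 : ∫ s in Set.Ioi t ∩ A, g s * (M / 2 ^ m)
          = (∫ s in Set.Ioi t ∩ A, g s) * (M / 2 ^ m) := integral_mul_const _ _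
      have h4 : ∫ s in Set.Ioi t ∩ A, g s ≤ ∫ s in Set.Ioi a ∩ A, g s := by
        apply setIntegral_mono_set (hg.mono_set inter_subset_right)
          (ae_restrict_of_ae_restrict_of_subset inter_subset_right hg0)
        exact HasSubset.Subset.eventuallyLE (inter_subset_inter_left _ (Ioi_subset_Ioi hat))
      have h5 : (∫ s in Set.Ioi t ∩ A, g s) * (M / 2 ^ m) ≤ (1/2) * (M / 2 ^ m) := by
        apply mul_le_mul_of_nonneg_right (le_trans h4 hhalf) (by positivity)
      calc u t ≤ (1/2) * (M / 2 ^ m) := by linarith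
        _ = M / 2 ^ (m + 1) := by ring
  intro t ht hat
  have hlim : Tendsto (fun m : ℕ => M / 2 ^ m) atTop (𝓝 0) := by
    have := tendsto_pow_atTop_nhds_zero_of_lt_one (by norm_num : (0:ℝ) ≤ 1/2) (by norm_num : (1:ℝ)/2 < 1)
    have h := this.const_mul M
    simp only [mul_zero] at h
    refine h.congr fun m => ?_
    rw [div_pow, one_pow]
    ring
  have : u t ≤ 0 := ge_of_tendsto hlim (Eventually.of_forall fun m => claim m t ht hat)
  linarith [hu0 t ht]

private lemma gronwall_zero {A : Set ℝ} (hA : MeasurableSet A) {g u : ℝ → ℝ} {M : ℝ}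
    (hg : IntegrableOn g A) (hg0 : ∀ s ∈ A, 0 ≤ g s)
    (hu_meas : AEStronglyMeasurable u (volume.restrict A))
    (hgu : IntegrableOn (fun s => g s * u s) A)
    (hu0 : ∀ t ∈ A, 0 ≤ u t) (huM : ∀ t ∈ A, u t ≤ M)
    (key : ∀ t ∈ A, u t ≤ ∫ s in Set.Ioi t ∩ A, g s * u s) :
    ∀ t ∈ A, u t = 0 := by
  have hg0' : ∀ᵐ s ∂(volume.restrict A), 0 ≤ g s :=
    (ae_restrict_iff' hA).mpr (ae_of_all _ hg0)
  -- the tail integral tends to 0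
  have htail : Tendsto (fun k : ℕ => ∫ s in Set.Ioi (k : ℝ) ∩ A, g s) atTop (𝓝 0) := by
    have heq : ∀ k : ℕ, ∫ s in Set.Ioi (k : ℝ) ∩ A, g s
        = ∫ s in A, (Set.Ioi (k : ℝ)).indicator g s := by
      intro k
      rw [setIntegral_indicator measurableSet_Ioi, Set.inter_comm]
    have h0 : (0 : ℝ) = ∫ s in A, (0 : ℝ → ℝ) s := by simp
    rw [funext heq, h0]
    apply tendsto_integral_of_dominated_convergence (fun s => |g s|)
    · exact fun k => hg.aestronglyMeasurable.indicator measurableSet_Ioi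
    · exact hg.abs
    · intro k
      filter_upwards with s
      calc ‖(Set.Ioi (k:ℝ)).indicator g s‖ ≤ ‖g s‖ := norm_indicator_le_norm_self _ _
        _ = |g s| := Real.norm_eq_abs _
    · filter_upwards with s
      have : ∀ᶠ k : ℕ in atTop, (Set.Ioi (k:ℝ)).indicator g s = 0 := by
        obtain ⟨k0, hk0⟩ := exists_nat_ge s
        filter_upwards [eventually_ge_atTop k0] with k hk
        apply Set.indicator_of_notMem
        simp only [Set.mem_Ioi, not_lt]
        exact le_trans hk0 (by exact_mod_cast hk)
      exact tendsto_const_nhds.congr' (this.mono fun k hk => hk.symm)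
  obtain ⟨r0, hr0⟩ : ∃ r0 : ℝ, ∫ s in Set.Ioi r0 ∩ A, g s ≤ 1/2 := by
    obtain ⟨k, hk⟩ := (htail.eventually_lt_const (by norm_num : (0:ℝ) < 1/2)).exists
    exact ⟨k, hk.le⟩
  set E := {r : ℝ | ∀ t ∈ A, r ≤ t → u t = 0} with hE
  have hstep : ∀ r : ℝ, (∫ s in Set.Ioi r ∩ A, g s ≤ 1/2) → r ∈ E :=
    fun r hr => halving_step hA hg hg0' hgu hu0 huM hr (fun t ht _ => key t ht)
  have hEne : E.Nonempty := ⟨r0, hstep r0 hr0⟩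
  have hnb : ¬ BddBelow E := by
    intro hbdd
    set c := sInf E with hc
    have hcE : ∀ t ∈ A, c ≤ t → u t = 0 := by
      have hgt : ∀ t ∈ A, c < t → u t = 0 := by
        intro t ht hct
        obtain ⟨r, hrE, hrt⟩ := exists_lt_of_csInf_lt hEne hct
        exact hrE t ht hrt.le
      intro t ht hct
      rcases eq_or_lt_of_le hct with h | h
      · have hz : ∫ s in Set.Ioi t ∩ A, g s * u s = 0 := by
          apply setIntegral_eq_zero_of_forall_eq_zero
          intro s hs
          rw [hgt s hs.2 (h ▸ hs.1), mul_zero]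
        have h2 := key t ht
        rw [hz] at h2
        linarith [hu0 t ht]
      · exact hgt t ht h
    have hshrink : Tendsto (fun k : ℕ => ∫ s in Set.Ioo (c - 1/((k:ℝ)+1)) c ∩ A, g s)
        atTop (𝓝 0) := by
      have heq : ∀ k : ℕ, ∫ s in Set.Ioo (c - 1/((k:ℝ)+1)) c ∩ A, g s
          = ∫ s in A, (Set.Ioo (c - 1/((k:ℝ)+1)) c).indicator g s := by
        intro k; rw [setIntegral_indicator measurableSet_Ioo, Set.inter_comm]
      have h0 : (0 : ℝ) = ∫ s in A, (0 : ℝ → ℝ) s := by simp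
      rw [funext heq, h0]
      apply tendsto_integral_of_dominated_convergence (fun s => |g s|)
      · exact fun k => hg.aestronglyMeasurable.indicator measurableSet_Ioo
      · exact hg.abs
      · intro k; filter_upwards with s
        calc ‖(Set.Ioo (c - 1/((k:ℝ)+1)) c).indicator g s‖ ≤ ‖g s‖ :=
              norm_indicator_le_norm_self _ _
          _ = |g s| := Real.norm_eq_abs _
      · filter_upwards with s
        have hev : ∀ᶠ k : ℕ in atTop, (Set.Ioo (c - 1/((k:ℝ)+1)) c).indicator g s = 0 := by
          rcases lt_or_ge s c with hsc | hsc
          · have h1 : Tendsto (fun k : ℕ => 1/((k:ℝ)+1)) atTop (𝓝 0) :=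
              tendsto_one_div_add_atTop_nhds_zero_nat
            filter_upwards [h1.eventually_lt_const (show (0:ℝ) < c - s by linarith)] with k hk
            apply Set.indicator_of_notMem
            simp only [Set.mem_Ioo, not_and]
            intro h2; linarith
          · filter_upwards with k
            apply Set.indicator_of_notMem
            simp only [Set.mem_Ioo, not_and]
            intro; linarith
        exact tendsto_const_nhds.congr' (hev.mono fun k hk => hk.symm)
    obtain ⟨k, hk⟩ := (hshrink.eventually_lt_const (by norm_num : (0:ℝ) < 1/2)).exists
    set a := c - 1/((k:ℝ)+1) with ha
    have hac : a < c := by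
      rw [ha]
      exact sub_lt_self c (by positivity)
    set g' := (Set.Iio c).indicator g with hg'def
    have hg' : IntegrableOn g' A := hg.indicator measurableSet_Iio
    have hg'0 : ∀ᵐ s ∂(volume.restrict A), 0 ≤ g' s := by
      filter_upwards [hg0'] with s hs
      exact Set.indicator_apply_nonneg (fun _ => hs)
    have hg'u : IntegrableOn (fun s => g' s * u s) A := by
      apply Integrable.mono hgu
        ((hg.aestronglyMeasurable.indicator measurableSet_Iio).mul hu_meas)
      filter_upwards with s
      show ‖g' s * u s‖ ≤ ‖g s * u s‖
      rw [Real.norm_eq_abs, Real.norm_eq_abs, abs_mul, abs_mul]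
      apply mul_le_mul_of_nonneg_right _ (abs_nonneg _)
      calc |g' s| = ‖g' s‖ := (Real.norm_eq_abs _).symm
        _ ≤ ‖g s‖ := norm_indicator_le_norm_self _ _
        _ = |g s| := Real.norm_eq_abs _
    have hhalf' : ∫ s in Set.Ioi a ∩ A, g' s ≤ 1/2 := by
      rw [hg'def, setIntegral_indicator measurableSet_Iio]
      have hseteq : (Set.Ioi a ∩ A) ∩ Set.Iio c = Set.Ioo a c ∩ A := by
        ext s
        simp only [Set.mem_inter_iff, Set.mem_Ioi, Set.mem_Iio, Set.mem_Ioo]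
        tauto
      rw [hseteq]
      exact hk.le
    have hkey' : ∀ t ∈ A, a ≤ t → u t ≤ ∫ s in Set.Ioi t ∩ A, g' s * u s := by
      intro t ht _
      have h2 := key t ht
      have heq2 : ∫ s in Set.Ioi t ∩ A, g s * u s = ∫ s in Set.Ioi t ∩ A, g' s * u s := by
        apply setIntegral_congr_fun (measurableSet_Ioi.inter hA)
        intro s hs
        show g s * u s = g' s * u s
        by_cases hsc : s < c
        · rw [hg'def, Set.indicator_of_mem (Set.mem_Iio.mpr hsc)]
        · rw [hcE s hs.2 (not_lt.mp hsc), mul_zero, mul_zero]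
      rw [heq2] at h2
      exact h2
    have haE : a ∈ E := halving_step hA hg' hg'0 hg'u hu0 huM hhalf' hkey'
    have := csInf_le hbdd haE
    linarith
  intro t ht
  obtain ⟨r, hrE, hrt⟩ := not_bddBelow_iff.mp hnb t
  exact hrE t ht hrt.le

/-- **Monotone-limit step in the proof of Lemma 2.1.** Let `β ∈ L¹([0,T];ℝ₊)`.  For `n ≥ 1`
let `ψ_n : ℝ₊ → ℝ₊` be Lipschitz, pointwise nonincreasing in `n`, converging pointwise to a
continuous `ψ : ℝ₊ → ℝ₊`; let `b_n ↓ 0` be nonnegative and let `v_n` be the (unique) bounded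
continuous solution of `v_n(t) = b_n + ∫_t^T β(s) ψ_n(v_n(s)) ds`.  Then `v_{n+1} ≤ v_n` on
`[0,T]`, and the pointwise limit `v` satisfies `v(t) = ∫_t^T β(s) ψ(v(s)) ds` on `[0,T]`. -/
theorem monotone_limit_step
    (T : EReal) (hT : 0 < T)
    (β : ℝ → ℝ)
    (hβ_nonneg : ∀ s ∈ timeSet T, 0 ≤ β s)
    (hβ_int : IntegrableOn β (timeSet T))
    (ψn : ℕ → ℝ → ℝ)
    (hψn_nonneg : ∀ n, 1 ≤ n → ∀ x, 0 ≤ x → 0 ≤ ψn n x)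
    (hψn_lip : ∀ n, 1 ≤ n → ∃ K : NNReal, LipschitzOnWith K (ψn n) (Ici 0))
    (hψn_antitone : ∀ n, 1 ≤ n → ∀ x, 0 ≤ x → ψn (n + 1) x ≤ ψn n x)
    (ψ : ℝ → ℝ)
    (hψ_nonneg : ∀ x, 0 ≤ x → 0 ≤ ψ x)
    (hψ_cont : ContinuousOn ψ (Ici 0))
    (hψn_lim : ∀ x, 0 ≤ x → Tendsto (fun n => ψn n x) atTop (𝓝 (ψ x)))
    (b : ℕ → ℝ)
    (hb_nonneg : ∀ n, 1 ≤ n → 0 ≤ b n)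
    (hb_antitone : ∀ n, 1 ≤ n → b (n + 1) ≤ b n)
    (hb_lim : Tendsto b atTop (𝓝 0))
    (v : ℕ → ℝ → ℝ)
    (hv_nonneg : ∀ n, 1 ≤ n → ∀ t ∈ timeSet T, 0 ≤ v n t)
    (hv_cont : ∀ n, 1 ≤ n → ContinuousOn (v n) (timeSet T))
    (hv_bdd : ∀ n, 1 ≤ n → ∃ M, ∀ t ∈ timeSet T, |v n t| ≤ M)
    (hv_eq : ∀ n, 1 ≤ n → ∀ t ∈ timeSet T,
      v n t = b n + ∫ s in Ioi t ∩ timeSet T, β s * ψn n (v n s)) :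
    (∀ n, 1 ≤ n → ∀ t ∈ timeSet T, v (n + 1) t ≤ v n t) ∧
    ∃ w : ℝ → ℝ,
      (∀ t ∈ timeSet T, Tendsto (fun n => v n t) atTop (𝓝 (w t))) ∧
      (∀ t ∈ timeSet T, w t = ∫ s in Ioi t ∩ timeSet T, β s * ψ (w s)) := by
  set S := timeSet T with hSdef
  have hS_closed : IsClosed S := by
    have hrepr : S = Ici (0:ℝ) ∩ (Real.toEReal ⁻¹' Iic T) := by
      ext s
      simp only [hSdef, timeSet, Set.mem_setOf_eq, Set.mem_inter_iff, Set.mem_Ici,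
        Set.mem_preimage, Set.mem_Iic]
    rw [hrepr]
    exact isClosed_Ici.inter (isClosed_Iic.preimage continuous_coe_real_ereal)
  have hS : MeasurableSet S := hS_closed.measurableSet
  have hcomp : ∀ n, 1 ≤ n → ContinuousOn (fun s => ψn n (v n s)) S := by
    intro n hn
    obtain ⟨K, hK⟩ := hψn_lip n hn
    exact hK.continuousOn.comp (hv_cont n hn) (fun s hs => hv_nonneg n hn s hs)
  have hf_int : ∀ n, 1 ≤ n → IntegrableOn (fun s => β s * ψn n (v n s)) S := by
    intro n hn
    obtain ⟨K, hK⟩ := hψn_lip n hn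
    obtain ⟨M, hM⟩ := hv_bdd n hn
    set C := max 0 (ψn n 0 + K * M) with hCdef
    have hbd : ∀ s ∈ S, 0 ≤ ψn n (v n s) ∧ ψn n (v n s) ≤ C := by
      intro s hs
      have hx0 : 0 ≤ v n s := hv_nonneg n hn s hs
      refine ⟨hψn_nonneg n hn _ hx0, ?_⟩
      have hd := hK.dist_le_mul _ hx0 0 Set.self_mem_Ici
      rw [Real.dist_eq, Real.dist_eq, sub_zero] at hd
      have h1 : ψn n (v n s) - ψn n 0 ≤ (K:ℝ) * |v n s| := le_trans (le_abs_self _) hd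
      have h2 : |v n s| ≤ M := hM s hs
      have h3 : (K:ℝ) * |v n s| ≤ (K:ℝ) * M := mul_le_mul_of_nonneg_left h2 K.coe_nonneg
      have : ψn n (v n s) ≤ ψn n 0 + (K:ℝ) * M := by linarith
      exact le_trans this (le_max_right _ _)
    apply Integrable.mono' (hβ_int.abs.const_mul C)
      (hβ_int.aestronglyMeasurable.mul ((hcomp n hn).aestronglyMeasurable hS))
    rw [ae_restrict_iff' hS]
    apply ae_of_all
    intro s hs
    obtain ⟨h0, hC⟩ := hbd s hs
    show ‖β s * ψn n (v n s)‖ ≤ C * |β s|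
    rw [Real.norm_eq_abs, abs_mul, abs_of_nonneg h0]
    calc |β s| * ψn n (v n s) ≤ |β s| * C := mul_le_mul_of_nonneg_left hC (abs_nonneg _)
      _ = C * |β s| := mul_comm _ _
  -- Part 1: monotonicity
  have hmono : ∀ n, 1 ≤ n → ∀ t ∈ S, v (n + 1) t ≤ v n t := by
    intro n hn
    have hn1 : 1 ≤ n + 1 := by omega
    obtain ⟨K, hK⟩ := hψn_lip n hn
    obtain ⟨M1, hM1⟩ := hv_bdd n hn
    obtain ⟨M2, hM2⟩ := hv_bdd (n+1) hn1
    set u : ℝ → ℝ := fun t => v (n+1) t - v n t with hudef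
    set w : ℝ → ℝ := fun t => max (u t) 0 with hwdef
    set g : ℝ → ℝ := fun s => (K:ℝ) * β s with hgdef
    have hu_cont : ContinuousOn u S := (hv_cont (n+1) hn1).sub (hv_cont n hn)
    have hw_cont : ContinuousOn w S := fun x hx => (hu_cont x hx).max continuousWithinAt_const
    have hw0 : ∀ t, 0 ≤ w t := fun t => le_max_right _ _
    have hwM : ∀ t ∈ S, w t ≤ M2 + M1 := by
      intro t ht
      have h1 := abs_le.mp (hM1 t ht)
      have h2 := abs_le.mp (hM2 t ht)
      have hu : u t = v (n+1) t - v n t := rfl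
      have : u t ≤ M2 + M1 := by rw [hu]; linarith
      exact max_le this (by linarith)
    have hg_int : IntegrableOn g S := hβ_int.const_mul _
    have hg0 : ∀ s ∈ S, 0 ≤ g s := fun s hs => mul_nonneg K.coe_nonneg (hβ_nonneg s hs)
    have hw_meas : AEStronglyMeasurable w (volume.restrict S) := hw_cont.aestronglyMeasurable hS
    have hgw_int : IntegrableOn (fun s => g s * w s) S := by
      apply Integrable.mono' (hg_int.abs.const_mul (M2 + M1))
        (hg_int.aestronglyMeasurable.mul hw_meas)
      rw [ae_restrict_iff' hS]
      apply ae_of_all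
      intro s hs
      show ‖g s * w s‖ ≤ (M2 + M1) * |g s|
      rw [Real.norm_eq_abs, abs_mul, abs_of_nonneg (hw0 s)]
      calc |g s| * w s ≤ |g s| * (M2 + M1) := mul_le_mul_of_nonneg_left (hwM s hs) (abs_nonneg _)
        _ = (M2 + M1) * |g s| := mul_comm _ _
    have hf1 : IntegrableOn (fun s => β s * ψn n (v n s)) S := hf_int n hn
    have hf2 : IntegrableOn (fun s => β s * ψn (n+1) (v (n+1) s)) S := hf_int (n+1) hn1
    have hf12 : IntegrableOn
        (fun s => β s * ψn (n+1) (v (n+1) s) - β s * ψn n (v n s)) S := hf2.sub hf1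
    have hueq : ∀ r ∈ S, u r = (b (n+1) - b n)
        + ∫ s in Ioi r ∩ S, (β s * ψn (n+1) (v (n+1) s) - β s * ψn n (v n s)) := by
      intro r hr
      have e1 := hv_eq n hn r hr
      have e2 := hv_eq (n+1) hn1 r hr
      have hs1 : ∫ s in Ioi r ∩ S, (β s * ψn (n+1) (v (n+1) s) - β s * ψn n (v n s))
          = (∫ s in Ioi r ∩ S, β s * ψn (n+1) (v (n+1) s))
            - ∫ s in Ioi r ∩ S, β s * ψn n (v n s) :=
        integral_sub (hf2.mono_set inter_subset_right) (hf1.mono_set inter_subset_right)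
      have hur : u r = v (n+1) r - v n r := rfl
      rw [hur, e1, e2, hs1]
      ring
    have hptwise : ∀ s ∈ S, 0 < u s →
        β s * ψn (n+1) (v (n+1) s) - β s * ψn n (v n s) ≤ g s * w s := by
      intro s hs hus
      have hv1 : v n s ∈ Ici (0:ℝ) := hv_nonneg n hn s hs
      have hv2 : v (n+1) s ∈ Ici (0:ℝ) := hv_nonneg (n+1) hn1 s hs
      have h1 : ψn (n+1) (v (n+1) s) ≤ ψn n (v (n+1) s) := hψn_antitone n hn _ hv2
      have hd := hK.dist_le_mul _ hv2 _ hv1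
      rw [Real.dist_eq, Real.dist_eq] at hd
      have h2 : ψn n (v (n+1) s) - ψn n (v n s) ≤ (K:ℝ) * |v (n+1) s - v n s| :=
        le_trans (le_abs_self _) hd
      have hus' : v (n+1) s - v n s = u s := rfl
      rw [hus', abs_of_pos hus] at h2
      have hws : w s = u s := max_eq_left hus.le
      have hb := hβ_nonneg s hs
      have hgs : g s = (K:ℝ) * β s := rfl
      calc β s * ψn (n+1) (v (n+1) s) - β s * ψn n (v n s)
          = β s * (ψn (n+1) (v (n+1) s) - ψn n (v n s)) := by ring
        _ ≤ β s * ((K:ℝ) * u s) := mul_le_mul_of_nonneg_left (by linarith) hb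
        _ = g s * w s := by rw [hws, hgs]; ring
    have hkey : ∀ t ∈ S, w t ≤ ∫ s in Ioi t ∩ S, g s * w s := by
      intro t ht
      have hnn : 0 ≤ ∫ s in Ioi t ∩ S, g s * w s :=
        setIntegral_nonneg (measurableSet_Ioi.inter hS)
          (fun s hs => mul_nonneg (hg0 s hs.2) (hw0 s))
      rcases le_or_gt (u t) 0 with hu | hu
      · exact le_trans (max_le hu le_rfl) hnn
      · have hwt : w t = u t := max_eq_left hu.le
        rw [hwt]
        by_cases hCne : ((S ∩ Ici t) ∩ u ⁻¹' (Iic 0)).Nonempty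
        · set t1 := sInf ((S ∩ Ici t) ∩ u ⁻¹' (Iic 0)) with ht1def
          have hCcl : IsClosed ((S ∩ Ici t) ∩ u ⁻¹' (Iic 0)) :=
            (hu_cont.mono inter_subset_left).preimage_isClosed_of_isClosed
              (hS_closed.inter isClosed_Ici) isClosed_Iic
          have hCbd : BddBelow ((S ∩ Ici t) ∩ u ⁻¹' (Iic 0)) := ⟨t, fun x hx => hx.1.2⟩
          have ht1mem := hCcl.csInf_mem hCne hCbd
          obtain ⟨⟨ht1S, htt1⟩, hut1⟩ := ht1mem
          rw [Set.mem_preimage, Set.mem_Iic] at hut1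
          rw [Set.mem_Ici] at htt1
          have hpos : ∀ s ∈ S, t ≤ s → s < t1 → 0 < u s := by
            intro s hsS hts hst1
            by_contra hle
            have hmem : s ∈ (S ∩ Ici t) ∩ u ⁻¹' (Iic 0) :=
              ⟨⟨hsS, hts⟩, Set.mem_preimage.mpr (Set.mem_Iic.mpr (not_lt.mp hle))⟩
            exact absurd (csInf_le hCbd hmem) (not_le.mpr hst1)
          have hseteq : Ioi t ∩ S = (Ioc t t1 ∩ S) ∪ (Ioi t1 ∩ S) := by
            rw [← union_inter_distrib_right, Ioc_union_Ioi_eq_Ioi htt1]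
          have hdisj : Disjoint (Ioc t t1 ∩ S) (Ioi t1 ∩ S) := by
            rw [Set.disjoint_left]
            rintro x ⟨hx1, _⟩ ⟨hx2, _⟩
            exact absurd hx2 (not_lt.mpr hx1.2)
          have hsplit : ∫ s in Ioi t ∩ S, (β s * ψn (n+1) (v (n+1) s) - β s * ψn n (v n s))
              = (∫ s in Ioc t t1 ∩ S, (β s * ψn (n+1) (v (n+1) s) - β s * ψn n (v n s)))
                + ∫ s in Ioi t1 ∩ S, (β s * ψn (n+1) (v (n+1) s) - β s * ψn n (v n s)) := by
            rw [hseteq]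
            exact setIntegral_union hdisj (measurableSet_Ioi.inter hS)
              (hf12.mono_set inter_subset_right)
              (hf12.mono_set inter_subset_right)
          have e_t := hueq t ht
          have e_t1 := hueq t1 ht1S
          have hne : ∀ᵐ s : ℝ, s ≠ t1 := by
            rw [ae_iff]
            have hset : {s : ℝ | ¬ s ≠ t1} = {t1} := by ext s; simp
            rw [hset]
            exact measure_singleton t1
          have hmid_le : ∫ s in Ioc t t1 ∩ S, (β s * ψn (n+1) (v (n+1) s) - β s * ψn n (v n s))
              ≤ ∫ s in Ioc t t1 ∩ S, g s * w s := by
            apply integral_mono_ae (hf12.mono_set inter_subset_right)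
              (hgw_int.mono_set inter_subset_right)
            filter_upwards [ae_restrict_of_ae hne,
              ae_restrict_mem (measurableSet_Ioc.inter hS)] with s hsne hs
            have hst1 : s < t1 := lt_of_le_of_ne hs.1.2 hsne
            exact hptwise s hs.2 (hpos s hs.2 hs.1.1.le hst1)
          have hmid_le2 : ∫ s in Ioc t t1 ∩ S, g s * w s ≤ ∫ s in Ioi t ∩ S, g s * w s := by
            apply setIntegral_mono_set (hgw_int.mono_set inter_subset_right)
              ((ae_restrict_iff' (measurableSet_Ioi.inter hS)).mpr
                (ae_of_all _ fun s hs => mul_nonneg (hg0 s hs.2) (hw0 s)))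
            exact HasSubset.Subset.eventuallyLE (inter_subset_inter_left _ Ioc_subset_Ioi_self)
          linarith
        · have hpos : ∀ s ∈ S, t ≤ s → 0 < u s := by
            intro s hsS hts
            by_contra hle
            exact hCne ⟨s, ⟨⟨hsS, hts⟩, Set.mem_preimage.mpr (Set.mem_Iic.mpr (not_lt.mp hle))⟩⟩
          have e_t := hueq t ht
          have hble : b (n+1) - b n ≤ 0 := by have := hb_antitone n hn; linarith
          have hle : ∫ s in Ioi t ∩ S, (β s * ψn (n+1) (v (n+1) s) - β s * ψn n (v n s))
              ≤ ∫ s in Ioi t ∩ S, g s * w s := by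
            apply integral_mono_ae (hf12.mono_set inter_subset_right)
              (hgw_int.mono_set inter_subset_right)
            filter_upwards [ae_restrict_mem (measurableSet_Ioi.inter hS)] with s hs
            exact hptwise s hs.2 (hpos s hs.2 (le_of_lt hs.1))
          linarith
    have hzero := gronwall_zero hS hg_int hg0 hw_meas hgw_int
      (fun t _ => hw0 t) hwM hkey
    intro t ht
    have hwt := hzero t ht
    have hle : u t ≤ 0 := le_trans (le_max_left _ _) (le_of_eq hwt)
    have hut : u t = v (n+1) t - v n t := rfl
    rw [hut] at hle
    linarith
  refine ⟨hmono, ?_⟩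
  have hmono_chain : ∀ n m, 1 ≤ n → n ≤ m → ∀ t ∈ S, v m t ≤ v n t := by
    intro n m hn hnm
    induction m, hnm using Nat.le_induction with
    | base => intro t ht; exact le_rfl
    | succ m hm ih =>
      intro t ht
      exact le_trans (hmono m (le_trans hn hm) t ht) (ih t ht)
  obtain ⟨M1, hM1⟩ := hv_bdd 1 le_rfl
  obtain ⟨K1, hK1⟩ := hψn_lip 1 le_rfl
  set C := max 0 (ψn 1 0 + K1 * M1) with hCdef
  have hv_le_v1 : ∀ k : ℕ, ∀ t ∈ S, v (k+1) t ≤ v 1 t :=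
    fun k t ht => hmono_chain 1 (k+1) le_rfl (by omega) t ht
  have hψchain : ∀ j l, 1 ≤ j → j ≤ l → ∀ x, 0 ≤ x → ψn l x ≤ ψn j x := by
    intro j l hj hjl
    induction l, hjl using Nat.le_induction with
    | base => intro x _; exact le_rfl
    | succ l hl ih =>
      intro x hx
      exact le_trans (hψn_antitone l (le_trans hj hl) x hx) (ih x hx)
  have hψ_le : ∀ j, 1 ≤ j → ∀ x, 0 ≤ x → ψ x ≤ ψn j x := by
    intro j hj x hx
    apply le_of_tendsto (hψn_lim x hx)
    filter_upwards [eventually_ge_atTop j] with l hl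
    exact hψchain j l hj hl x hx
  set w : ℝ → ℝ := fun t => ⨅ k : ℕ, v (k+1) t with hwdef
  have hconv1 : ∀ t ∈ S, Tendsto (fun k => v (k+1) t) atTop (𝓝 (w t)) := by
    intro t ht
    apply tendsto_atTop_ciInf
    · exact antitone_nat_of_succ_le fun k => hmono (k+1) (by omega) t ht
    · refine ⟨0, ?_⟩
      rintro x ⟨k, rfl⟩
      exact hv_nonneg (k+1) (by omega) t ht
  have hconv : ∀ t ∈ S, Tendsto (fun n => v n t) atTop (𝓝 (w t)) :=
    fun t ht => (tendsto_add_atTop_iff_nat 1).mp (hconv1 t ht)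
  refine ⟨w, hconv, ?_⟩
  intro t ht
  have hD : MeasurableSet (Ioi t ∩ S) := measurableSet_Ioi.inter hS
  have hw_nonneg : ∀ s ∈ S, 0 ≤ w s := by
    intro s hs
    apply le_ciInf
    intro k
    exact hv_nonneg (k+1) (by omega) s hs
  have hptw : ∀ s ∈ S, Tendsto (fun k => ψn (k+1) (v (k+1) s)) atTop (𝓝 (ψ (w s))) := by
    intro s hs
    have hx0 : 0 ≤ w s := hw_nonneg s hs
    have hxk0 : ∀ k : ℕ, 0 ≤ v (k+1) s := fun k => hv_nonneg (k+1) (by omega) s hs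
    have hxk : Tendsto (fun k => v (k+1) s) atTop (𝓝 (w s)) := hconv1 s hs
    have hxkw : Tendsto (fun k => v (k+1) s) atTop (𝓝[Ici 0] (w s)) :=
      tendsto_nhdsWithin_iff.mpr ⟨hxk, Eventually.of_forall fun k => hxk0 k⟩
    rw [Metric.tendsto_atTop]
    intro ε hε
    obtain ⟨m, hm2, hm1⟩ : ∃ m, ψn m (w s) < ψ (w s) + ε/2 ∧ 1 ≤ m := by
      have h := (hψn_lim (w s) hx0).eventually_lt_const
        (show ψ (w s) < ψ (w s) + ε/2 by linarith)
      exact (h.and (eventually_ge_atTop 1)).exists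
    obtain ⟨Km, hKm⟩ := hψn_lip m hm1
    have hcont_m : Tendsto (fun k => ψn m (v (k+1) s)) atTop (𝓝 (ψn m (w s))) :=
      ((hKm.continuousOn (w s) hx0).tendsto).comp hxkw
    have hcont_ψ : Tendsto (fun k => ψ (v (k+1) s)) atTop (𝓝 (ψ (w s))) :=
      ((hψ_cont (w s) hx0).tendsto).comp hxkw
    have h1 : ∀ᶠ k : ℕ in atTop, ψn m (v (k+1) s) < ψ (w s) + ε :=
      hcont_m.eventually_lt_const (by linarith)
    have h2 : ∀ᶠ k : ℕ in atTop, ψ (w s) - ε < ψ (v (k+1) s) :=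
      hcont_ψ.eventually_const_lt (by linarith)
    have h3 : ∀ᶠ k : ℕ in atTop, m ≤ k + 1 :=
      (eventually_ge_atTop m).mono fun k hk => by omega
    rcases eventually_atTop.mp (h1.and (h2.and h3)) with ⟨N, hN⟩
    refine ⟨N, fun k hk => ?_⟩
    obtain ⟨hA1, hA2, hA3⟩ := hN k hk
    have hlow : ψ (v (k+1) s) ≤ ψn (k+1) (v (k+1) s) := hψ_le (k+1) (by omega) _ (hxk0 k)
    have hup : ψn (k+1) (v (k+1) s) ≤ ψn m (v (k+1) s) := hψchain m (k+1) hm1 hA3 _ (hxk0 k)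
    rw [Real.dist_eq, abs_lt]
    constructor <;> linarith
  have hbound : ∀ k : ℕ, ∀ s ∈ S, 0 ≤ ψn (k+1) (v (k+1) s) ∧ ψn (k+1) (v (k+1) s) ≤ C := by
    intro k s hs
    have hx0 : 0 ≤ v (k+1) s := hv_nonneg (k+1) (by omega) s hs
    refine ⟨hψn_nonneg (k+1) (by omega) _ hx0, ?_⟩
    have h1 : ψn (k+1) (v (k+1) s) ≤ ψn 1 (v (k+1) s) := hψchain 1 (k+1) le_rfl (by omega) _ hx0
    have hd := hK1.dist_le_mul _ hx0 0 Set.self_mem_Ici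
    rw [Real.dist_eq, Real.dist_eq, sub_zero] at hd
    have h2 : ψn 1 (v (k+1) s) - ψn 1 0 ≤ (K1:ℝ) * |v (k+1) s| := le_trans (le_abs_self _) hd
    have hvle : |v (k+1) s| ≤ M1 := by
      rw [abs_of_nonneg hx0]
      exact le_trans (hv_le_v1 k s hs) (le_trans (le_abs_self _) (hM1 s hs))
    have h3 : (K1:ℝ) * |v (k+1) s| ≤ (K1:ℝ) * M1 := mul_le_mul_of_nonneg_left hvle K1.coe_nonneg
    have h4 : ψn 1 (v (k+1) s) ≤ ψn 1 0 + (K1:ℝ) * M1 := by linarith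
    exact le_trans h1 (le_trans h4 (le_max_right _ _))
  have hF_meas : ∀ k : ℕ, AEStronglyMeasurable (fun s => β s * ψn (k+1) (v (k+1) s))
      (volume.restrict (Ioi t ∩ S)) :=
    fun k => ((hf_int (k+1) (by omega)).mono_set inter_subset_right).aestronglyMeasurable
  have hbd_int0 : IntegrableOn (fun s => C * |β s|) S := hβ_int.abs.const_mul C
  have hbd_int : IntegrableOn (fun s => C * |β s|) (Ioi t ∩ S) :=
    hbd_int0.mono_set inter_subset_right
  have hFbound : ∀ k : ℕ, ∀ᵐ s ∂(volume.restrict (Ioi t ∩ S)),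
      ‖β s * ψn (k+1) (v (k+1) s)‖ ≤ C * |β s| := by
    intro k
    filter_upwards [ae_restrict_mem hD] with s hs
    obtain ⟨h0, hC⟩ := hbound k s hs.2
    rw [Real.norm_eq_abs, abs_mul, abs_of_nonneg h0]
    calc |β s| * ψn (k+1) (v (k+1) s) ≤ |β s| * C := mul_le_mul_of_nonneg_left hC (abs_nonneg _)
      _ = C * |β s| := mul_comm _ _
  have hFtend : ∀ᵐ s ∂(volume.restrict (Ioi t ∩ S)),
      Tendsto (fun k => β s * ψn (k+1) (v (k+1) s)) atTop (𝓝 (β s * ψ (w s))) := by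
    filter_upwards [ae_restrict_mem hD] with s hs
    exact (hptw s hs.2).const_mul (β s)
  have hDCT := tendsto_integral_of_dominated_convergence (fun s => C * |β s|)
    hF_meas hbd_int hFbound hFtend
  have heqk : (fun k : ℕ => ∫ s in Ioi t ∩ S, β s * ψn (k+1) (v (k+1) s))
      = fun k => v (k+1) t - b (k+1) := by
    funext k
    have h := hv_eq (k+1) (by omega) t ht
    linarith
  rw [heqk] at hDCT
  have hlim2 : Tendsto (fun k : ℕ => v (k+1) t - b (k+1)) atTop (𝓝 (w t - 0)) :=
    (hconv1 t ht).sub ((tendsto_add_atTop_iff_nat 1).mpr hb_lim)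
  have hfin := tendsto_nhds_unique hlim2 hDCT
  rw [sub_zero] at hfin
  exact hfin
end
end

section
/- Let v ≥ 0, λ ≥ 0, α ∈ (0,1) and let d ≥ 1 be an integer. Then for all z₁, z₂ ∈ ℝ^d: | min(v|z₁|, λ|z₁|^α) − min(v|z₂|, λ|z₂|^α) | ≤ min(v|z₁−z₂|, λ|z₁−z₂|^α). (Inequality (56) in the proof of Lemma 6.2.) -/
/-!
The profile `f t = min (v t) (λ t^α)` is concave on `[0, ∞)` as a minimum of concave functions,
and `f 0 = 0`; a concave function with `f 0 ≥ 0` is subadditive on `[0, ∞)`. Together with the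
monotonicity of `f`, subadditivity gives `|f a - f b| ≤ f |a - b|`, and the reverse triangle
inequality `|‖z₁‖ - ‖z₂‖| ≤ ‖z₁ - z₂‖` finishes.
-/

open Set

theorem ConcaveOn.map_add_le_add {f : ℝ → ℝ} (hf : ConcaveOn ℝ (Ici 0) f) (h0 : 0 ≤ f 0)
    {a b : ℝ} (ha : 0 ≤ a) (hb : 0 ≤ b) : f (a + b) ≤ f a + f b := by
  rcases (add_nonneg ha hb).eq_or_lt with hab | hab
  · obtain ⟨rfl, rfl⟩ := (add_eq_zero_iff_of_nonneg ha hb).mp hab.symm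
    simpa using h0
  -- `a` (resp. `b`) is a convex combination of `0` and `a + b`.
  have chord_le {c : ℝ} (hc : 0 ≤ c) (hcab : c ≤ a + b) : c / (a + b) * f (a + b) ≤ f c := by
    have hw : 0 ≤ c / (a + b) := div_nonneg hc hab.le
    have hw' : 0 ≤ 1 - c / (a + b) := by rw [sub_nonneg, div_le_one hab]; exact hcab
    have := hf.2 (x := 0) (y := a + b) self_mem_Ici (mem_Ici.2 hab.le) hw' hw (by ring)
    simp only [smul_eq_mul, mul_zero, zero_add, div_mul_cancel₀ c hab.ne'] at this
    linarith [mul_nonneg hw' h0]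
  have hsum : a / (a + b) * f (a + b) + b / (a + b) * f (a + b) = f (a + b) := by
    field_simp
  linarith [chord_le ha (by linarith), chord_le hb (by linarith)]

theorem MonotoneOn.abs_sub_le_of_subadditive {f : ℝ → ℝ} (hmono : MonotoneOn f (Ici 0))
    (hsub : ∀ a b, 0 ≤ a → 0 ≤ b → f (a + b) ≤ f a + f b) {a b : ℝ} (ha : 0 ≤ a) (hb : 0 ≤ b) :
    |f a - f b| ≤ f |a - b| := by
  wlog hba : b ≤ a generalizing a b
  · rw [abs_sub_comm, abs_sub_comm a]
    exact this hb ha (le_of_not_ge hba)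
  have hsplit := hsub b (a - b) hb (sub_nonneg.2 hba)
  rw [add_sub_cancel] at hsplit
  rw [abs_of_nonneg (sub_nonneg.2 (hmono hb ha hba)), abs_of_nonneg (sub_nonneg.2 hba)]
  linarith

theorem MonotoneOn.abs_map_norm_sub_map_norm_le {E : Type*} [SeminormedAddCommGroup E]
    {f : ℝ → ℝ} (hmono : MonotoneOn f (Ici 0))
    (hsub : ∀ a b, 0 ≤ a → 0 ≤ b → f (a + b) ≤ f a + f b) (x y : E) :
    |f ‖x‖ - f ‖y‖| ≤ f ‖x - y‖ :=
  (hmono.abs_sub_le_of_subadditive hsub (norm_nonneg x) (norm_nonneg y)).trans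
    (hmono (mem_Ici.2 (abs_nonneg _)) (mem_Ici.2 (norm_nonneg _)) (abs_norm_sub_norm_le x y))

theorem inequality_56_general
    (d : ℕ)
    (v lam α : ℝ) (hv : 0 ≤ v) (hlam : 0 ≤ lam) (hα : α ∈ Ioo (0 : ℝ) 1)
    (z₁ z₂ : EuclideanSpace ℝ (Fin d)) :
    |min (v * ‖z₁‖) (lam * ‖z₁‖ ^ α) - min (v * ‖z₂‖) (lam * ‖z₂‖ ^ α)|
      ≤ min (v * ‖z₁ - z₂‖) (lam * ‖z₁ - z₂‖ ^ α) := by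
  set f : ℝ → ℝ := fun t => min (v * t) (lam * t ^ α)
  have hconc : ConcaveOn ℝ (Ici 0) f :=
    ((concaveOn_id (convex_Ici 0)).smul hv).inf
      ((Real.concaveOn_rpow hα.1.le hα.2.le).smul hlam)
  have hmono : MonotoneOn f (Ici 0) := fun a ha b _ hab =>
    min_le_min (mul_le_mul_of_nonneg_left hab hv)
      (mul_le_mul_of_nonneg_left (Real.rpow_le_rpow ha hab hα.1.le) hlam)
  have hf0 : 0 ≤ f 0 := by
    simp only [f, mul_zero, le_min_iff, le_refl, true_and]
    exact mul_nonneg hlam (Real.rpow_nonneg le_rfl α)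
  exact hmono.abs_map_norm_sub_map_norm_le
    (fun _ _ ha hb => hconc.map_add_le_add hf0 ha hb) z₁ z₂

/-- **Inequality (56) in the proof of Lemma 6.2.** For `v, λ ≥ 0`, `α ∈ (0,1)` and
`z₁, z₂ ∈ ℝ^d`:
`|min(v|z₁|, λ|z₁|^α) - min(v|z₂|, λ|z₂|^α)| ≤ min(v|z₁-z₂|, λ|z₁-z₂|^α)`. -/
theorem inequality_56
    (d : ℕ) (hd : 1 ≤ d)
    (v lam α : ℝ) (hv : 0 ≤ v) (hlam : 0 ≤ lam) (hα : α ∈ Ioo (0 : ℝ) 1)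
    (z₁ z₂ : EuclideanSpace ℝ (Fin d)) :
    |min (v * ‖z₁‖) (lam * ‖z₁‖ ^ α) - min (v * ‖z₂‖) (lam * ‖z₂‖ ^ α)|
      ≤ min (v * ‖z₁ - z₂‖) (lam * ‖z₁ - z₂‖ ^ α) :=
  inequality_56_general d v lam α hv hlam hα z₁ z₂
end

section
/- Let d ≥ 1 be an integer and g:ℝ×ℝ^d→ℝ. Let u, λ, f, m, k ≥ 0, α ∈ (0,1), and let ρ:ℝ₊→ℝ₊ be nondecreasing with ρ(x) ≤ k(x+1) for all x ≥ 0. Assume: (g(y₁,z) − g(y₂,z))·sgn(y₁−y₂) ≤ u ρ(|y₁−y₂|) for all y₁, y₂ ∈ ℝ and z ∈ ℝ^d; |g(y,z) − g(y,0)| ≤ λ (f + |y| + |z|)^α for all (y,z); and |g(0,0)| ≤ m. Then for all (y,z) ∈ ℝ×ℝ^d: g(y,z)·sgn(y) ≤ (ku + λ f^α + m) + ku|y| + λ|z|^α. (Inequality (64) in the proof of Theorem 6.5.) -/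
open Set

lemma Real.mul_sign_le_abs (a r : ℝ) : a * Real.sign r ≤ |a| := by
  rcases Real.sign_apply_eq r with h | h | h <;> rw [h]
  · simpa using neg_le_abs a
  · simp
  · simpa using le_abs_self a

lemma abs_le_of_abs_sub_apply_zero_le_rpow {E : Type*} [SeminormedAddCommGroup E] {h : E → ℝ}
    {lam f m α : ℝ} (hlam : 0 ≤ lam) (hf : 0 ≤ f) (hα₀ : 0 ≤ α) (hα₁ : α ≤ 1)
    (hdiff : ∀ z, |h z - h 0| ≤ lam * (f + ‖z‖) ^ α) (h0 : |h 0| ≤ m) (z : E) :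
    |h z| ≤ lam * f ^ α + lam * ‖z‖ ^ α + m := by
  have hsub : (f + ‖z‖) ^ α ≤ f ^ α + ‖z‖ ^ α :=
    Real.rpow_add_le_add_rpow hf (norm_nonneg z) hα₀ hα₁
  calc |h z| ≤ |h z - h 0| + |h 0| := by linarith [abs_sub_abs_le_abs_sub (h z) (h 0)]
    _ ≤ lam * (f + ‖z‖) ^ α + m := add_le_add (hdiff z) h0
    _ ≤ lam * (f ^ α + ‖z‖ ^ α) + m := by gcongr
    _ = lam * f ^ α + lam * ‖z‖ ^ α + m := by ring

theorem inequality_64_general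
    (d : ℕ)
    (g : ℝ → EuclideanSpace ℝ (Fin d) → ℝ)
    (u lam f m k α : ℝ)
    (hu : 0 ≤ u) (hlam : 0 ≤ lam) (hf : 0 ≤ f)
    (hα : α ∈ Ioo (0 : ℝ) 1)
    (ρ : ℝ → ℝ)
    (hρ_growth : ∀ x, 0 ≤ x → ρ x ≤ k * (x + 1))
    (h2A1 : ∀ y₁ y₂ z, (g y₁ z - g y₂ z) * Real.sign (y₁ - y₂) ≤ u * ρ |y₁ - y₂|)
    (h2A5 : ∀ y z, |g y z - g y 0| ≤ lam * (f + |y| + ‖z‖) ^ α)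
    (hg00 : |g 0 0| ≤ m) :
    ∀ y z, g y z * Real.sign y ≤ (k * u + lam * f ^ α + m) + k * u * |y| + lam * ‖z‖ ^ α := by
  intro y z
  have hosgood : (g y z - g 0 z) * Real.sign y ≤ u * (k * (|y| + 1)) := by
    simpa using (h2A1 y 0 z).trans (mul_le_mul_of_nonneg_left (hρ_growth _ (abs_nonneg _)) hu)
  have hslice : |g 0 z| ≤ lam * f ^ α + lam * ‖z‖ ^ α + m :=
    abs_le_of_abs_sub_apply_zero_le_rpow hlam hf hα.1.le hα.2.le
      (fun z ↦ by simpa using h2A5 0 z) hg00 z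
  calc g y z * Real.sign y = (g y z - g 0 z) * Real.sign y + g 0 z * Real.sign y := by ring
    _ ≤ u * (k * (|y| + 1)) + |g 0 z| := add_le_add hosgood (Real.mul_sign_le_abs _ _)
    _ ≤ (k * u + lam * f ^ α + m) + k * u * |y| + lam * ‖z‖ ^ α := by linarith

/-- **Inequality (64) in the proof of Theorem 6.5.** If `g : ℝ × ℝ^d → ℝ` satisfies a
one-sided Osgood-type condition in `y` with modulus `ρ` (nondecreasing, `ρ(x) ≤ k(x+1)`),
`|g(y,z) - g(y,0)| ≤ λ (f + |y| + |z|)^α` with `α ∈ (0,1)`, and `|g(0,0)| ≤ m`, then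
`g(y,z)·sgn(y) ≤ (ku + λ f^α + m) + ku|y| + λ|z|^α` for all `(y,z)`. -/
theorem inequality_64
    (d : ℕ) (hd : 1 ≤ d)
    (g : ℝ → EuclideanSpace ℝ (Fin d) → ℝ)
    (u lam f m k α : ℝ)
    (hu : 0 ≤ u) (hlam : 0 ≤ lam) (hf : 0 ≤ f) (hm : 0 ≤ m) (hk : 0 ≤ k)
    (hα : α ∈ Ioo (0 : ℝ) 1)
    (ρ : ℝ → ℝ)
    (hρ_nonneg : ∀ x, 0 ≤ x → 0 ≤ ρ x)
    (hρ_mono : MonotoneOn ρ (Ici 0))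
    (hρ_growth : ∀ x, 0 ≤ x → ρ x ≤ k * (x + 1))
    (h2A1 : ∀ y₁ y₂ z, (g y₁ z - g y₂ z) * Real.sign (y₁ - y₂) ≤ u * ρ |y₁ - y₂|)
    (h2A5 : ∀ y z, |g y z - g y 0| ≤ lam * (f + |y| + ‖z‖) ^ α)
    (hg00 : |g 0 0| ≤ m) :
    ∀ y z, g y z * Real.sign y ≤ (k * u + lam * f ^ α + m) + k * u * |y| + lam * ‖z‖ ^ α :=
  inequality_64_general d g u lam f m k α hu hlam hf hα ρ hρ_growth h2A1 h2A5 hg00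
end

section
/- Let d ≥ 1 be an integer, f̃ ≥ 0, ũ > 0, ṽ > 0, λ̃ > 0 and α ∈ (0,1); set κ(x) = min(ṽx, λ̃x^α) for x ≥ 0. Let g:ℝ×ℝ^d→ℝ be continuous with |g(y,z)| ≤ f̃ + ũ|y| + κ(|z|) for all (y,z). For each integer n ≥ 1 define g_n(y,z) = sup_{(p,q)∈ℝ×ℝ^d} ( g(p,q) − nũ|y−p| − nκ(|z−q|) ). Then for every n ≥ 1: (i) g(y,z) ≤ g_n(y,z) ≤ f̃ + ũ|y| + κ(|z|) for all (y,z); (ii) g_{n+1}(y,z) ≤ g_n(y,z) for all (y,z); (iii) |g_n(y₁,z₁) − g_n(y₂,z₂)| ≤ nũ|y₁−y₂| + nκ(|z₁−z₂|) for all (y₁,z₁),(y₂,z₂); (iv) whenever (y_n,z_n) → (y,z) in ℝ×ℝ^d, g_n(y_n,z_n) → g(y,z). (Sup-convolution approximation (61) of the generator used in the proof of Theorem 6.2.) -/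
open Set Filter Topology

noncomputable section

/-- **Sup-convolution approximation (61) of the generator used in the proof of Theorem 6.2.**
With `κ(x) = min(ṽx, λ̃x^α)`, let `g : ℝ × ℝ^d → ℝ` be continuous with
`|g(y,z)| ≤ f̃ + ũ|y| + κ(|z|)`, and for `n ≥ 1` set
`g_n(y,z) = sup_{(p,q)} (g(p,q) - nũ|y-p| - nκ(|z-q|))`.  Then:
(i) `g ≤ g_n ≤ f̃ + ũ|·| + κ(|·|)`; (ii) `g_{n+1} ≤ g_n`;
(iii) `|g_n(y₁,z₁) - g_n(y₂,z₂)| ≤ nũ|y₁-y₂| + nκ(|z₁-z₂|)`;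
(iv) if `(y_n,z_n) → (y,z)` then `g_n(y_n,z_n) → g(y,z)`. -/
theorem sup_convolution_generator_61
    (d : ℕ) (hd : 1 ≤ d)
    (ftil util vtil lamtil α : ℝ)
    (hf : 0 ≤ ftil) (hu : 0 < util) (hv : 0 < vtil) (hlam : 0 < lamtil)
    (hα : α ∈ Ioo (0 : ℝ) 1)
    (κ : ℝ → ℝ) (hκ : ∀ x, κ x = min (vtil * x) (lamtil * x ^ α))
    (g : ℝ → EuclideanSpace ℝ (Fin d) → ℝ)
    (hg_cont : Continuous fun p : ℝ × EuclideanSpace ℝ (Fin d) => g p.1 p.2)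
    (hg_growth : ∀ y z, |g y z| ≤ ftil + util * |y| + κ ‖z‖)
    (gn : ℕ → ℝ → EuclideanSpace ℝ (Fin d) → ℝ)
    (hgn : ∀ n y z, gn n y z =
      ⨆ pq : ℝ × EuclideanSpace ℝ (Fin d),
        (g pq.1 pq.2 - (n : ℝ) * util * |y - pq.1| - (n : ℝ) * κ ‖z - pq.2‖)) :
    (∀ n, 1 ≤ n → ∀ y z, g y z ≤ gn n y z ∧ gn n y z ≤ ftil + util * |y| + κ ‖z‖) ∧
    (∀ n, 1 ≤ n → ∀ y z, gn (n + 1) y z ≤ gn n y z) ∧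
    (∀ n : ℕ, 1 ≤ n → ∀ y₁ z₁ y₂ z₂,
      |gn n y₁ z₁ - gn n y₂ z₂| ≤ (n : ℝ) * util * |y₁ - y₂| + (n : ℝ) * κ ‖z₁ - z₂‖) ∧
    (∀ (ys : ℕ → ℝ) (zs : ℕ → EuclideanSpace ℝ (Fin d)) (y : ℝ)
      (z : EuclideanSpace ℝ (Fin d)),
      Tendsto ys atTop (𝓝 y) → Tendsto zs atTop (𝓝 z) →
      Tendsto (fun n => gn n (ys n) (zs n)) atTop (𝓝 (g y z))) := by
  have hα0 : (0:ℝ) < α := hα.1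
  have hα1 : α < 1 := hα.2
  -- basic facts about κ
  have hκ0 : κ 0 = 0 := by
    rw [hκ]
    rw [Real.zero_rpow (ne_of_gt hα0)]
    simp
  have hκ_nonneg : ∀ x : ℝ, 0 ≤ x → 0 ≤ κ x := by
    intro x hx
    rw [hκ]
    exact le_min (by positivity) (by positivity)
  have hκ_pos : ∀ x : ℝ, 0 < x → 0 < κ x := by
    intro x hx
    rw [hκ]
    exact lt_min (by positivity) (mul_pos hlam (Real.rpow_pos_of_pos hx α))
  have hκ_mono : ∀ x y : ℝ, 0 ≤ x → x ≤ y → κ x ≤ κ y := by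
    intro x y hx hxy
    rw [hκ, hκ]
    exact min_le_min (mul_le_mul_of_nonneg_left hxy hv.le)
      (mul_le_mul_of_nonneg_left (Real.rpow_le_rpow hx hxy hα0.le) hlam.le)
  have hκ_concave : ConcaveOn ℝ (Ici 0) κ := by
    have h1 : ConcaveOn ℝ (Ici (0:ℝ)) (fun x : ℝ => vtil * x) := by
      simpa [smul_eq_mul] using (concaveOn_id (convex_Ici (0:ℝ))).smul hv.le
    have h2 : ConcaveOn ℝ (Ici (0:ℝ)) (fun x : ℝ => lamtil * x ^ α) := by
      simpa [smul_eq_mul] using (Real.concaveOn_rpow hα0.le hα1.le).smul hlam.le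
    have := h1.inf h2
    have heq : κ = (fun x : ℝ => vtil * x) ⊓ (fun x : ℝ => lamtil * x ^ α) := by
      funext x; simpa [Pi.inf_apply] using hκ x
    rw [heq]; exact this
  have hκ_sub : ∀ a b : ℝ, 0 ≤ a → 0 ≤ b → κ (a + b) ≤ κ a + κ b := by
    intro a b ha hb
    rcases eq_or_lt_of_le (by positivity : (0:ℝ) ≤ a + b) with h | h
    · have ha0 : a = 0 := by linarith
      have hb0 : b = 0 := by linarith
      simp [ha0, hb0, hκ0]
    · have hne : a + b ≠ 0 := ne_of_gt h
      have ht : a / (a + b) + b / (a + b) = 1 := by field_simp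
      have ht' : b / (a + b) + a / (a + b) = 1 := by rw [add_comm]; exact ht
      have hA := hκ_concave.2 (mem_Ici.mpr h.le) (mem_Ici.mpr le_rfl)
        (div_nonneg ha h.le) (div_nonneg hb h.le) ht
      have hB := hκ_concave.2 (mem_Ici.mpr h.le) (mem_Ici.mpr le_rfl)
        (div_nonneg hb h.le) (div_nonneg ha h.le) ht'
      simp only [smul_eq_mul, hκ0, mul_zero, add_zero] at hA hB
      rw [div_mul_cancel₀ _ hne] at hA hB
      have hsum : a / (a+b) * κ (a+b) + b / (a+b) * κ (a+b) = κ (a+b) := by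
        rw [← add_mul, ht, one_mul]
      linarith
  -- the term bound
  have hterm_le : ∀ (n : ℕ), 1 ≤ n → ∀ (y : ℝ) (z : EuclideanSpace ℝ (Fin d))
      (pq : ℝ × EuclideanSpace ℝ (Fin d)),
      g pq.1 pq.2 - (n : ℝ) * util * |y - pq.1| - (n : ℝ) * κ ‖z - pq.2‖
        ≤ ftil + util * |y| + κ ‖z‖ := by
    intro n hn y z pq
    have habs : g pq.1 pq.2 ≤ ftil + util * |pq.1| + κ ‖pq.2‖ :=
      (abs_le.mp (hg_growth pq.1 pq.2)).2
    have h1 : |pq.1| ≤ |y| + |y - pq.1| := by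
      have := abs_sub_abs_le_abs_sub pq.1 y
      rw [abs_sub_comm] at this
      linarith
    have h2 : κ ‖pq.2‖ ≤ κ ‖z‖ + κ ‖z - pq.2‖ := by
      have hn1 : ‖pq.2‖ ≤ ‖z‖ + ‖z - pq.2‖ := by
        have := norm_sub_norm_le pq.2 z
        rw [norm_sub_rev] at this
        linarith
      exact le_trans (hκ_mono _ _ (norm_nonneg _) hn1)
        (hκ_sub _ _ (norm_nonneg _) (norm_nonneg _))
    have hP1 : 0 ≤ util * |y - pq.1| := by positivity
    have hP2 : 0 ≤ κ ‖z - pq.2‖ := hκ_nonneg _ (norm_nonneg _)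
    have hn' : (1:ℝ) ≤ (n:ℝ) := by exact_mod_cast hn
    nlinarith [mul_le_mul_of_nonneg_left h1 hu.le,
      le_mul_of_one_le_left hP1 hn', le_mul_of_one_le_left hP2 hn']
  have hbdd : ∀ (n : ℕ), 1 ≤ n → ∀ (y : ℝ) (z : EuclideanSpace ℝ (Fin d)),
      BddAbove (Set.range (fun pq : ℝ × EuclideanSpace ℝ (Fin d) =>
        g pq.1 pq.2 - (n : ℝ) * util * |y - pq.1| - (n : ℝ) * κ ‖z - pq.2‖)) := by
    intro n hn y z
    refine ⟨ftil + util * |y| + κ ‖z‖, ?_⟩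
    rintro _ ⟨pq, rfl⟩
    exact hterm_le n hn y z pq
  -- part (i)
  have hlow : ∀ (n : ℕ), 1 ≤ n → ∀ y z, g y z ≤ gn n y z := by
    intro n hn y z
    rw [hgn]
    have := le_ciSup (hbdd n hn y z) (⟨y, z⟩ : ℝ × EuclideanSpace ℝ (Fin d))
    simpa [hκ0] using this
  have hup : ∀ (n : ℕ), 1 ≤ n → ∀ y z, gn n y z ≤ ftil + util * |y| + κ ‖z‖ := by
    intro n hn y z
    rw [hgn]
    exact ciSup_le (hterm_le n hn y z)
  -- part (iii) key inequality
  have key : ∀ (n : ℕ), 1 ≤ n → ∀ y₁ z₁ y₂ z₂,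
      gn n y₁ z₁ ≤ gn n y₂ z₂ + ((n:ℝ) * util * |y₁ - y₂| + (n:ℝ) * κ ‖z₁ - z₂‖) := by
    intro n hn y₁ z₁ y₂ z₂
    rw [hgn]
    apply ciSup_le
    intro pq
    have hle : g pq.1 pq.2 - (n:ℝ) * util * |y₂ - pq.1| - (n:ℝ) * κ ‖z₂ - pq.2‖
        ≤ gn n y₂ z₂ := by
      rw [hgn]
      exact le_ciSup (hbdd n hn y₂ z₂) pq
    have h1 : |y₂ - pq.1| ≤ |y₁ - pq.1| + |y₁ - y₂| := by
      have := abs_sub_le y₂ y₁ pq.1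
      rw [abs_sub_comm y₂ y₁] at this
      linarith
    have h2 : κ ‖z₂ - pq.2‖ ≤ κ ‖z₁ - pq.2‖ + κ ‖z₁ - z₂‖ := by
      have heq : z₂ - pq.2 = (z₁ - pq.2) - (z₁ - z₂) := by abel
      have hnrm : ‖z₂ - pq.2‖ ≤ ‖z₁ - pq.2‖ + ‖z₁ - z₂‖ := by
        rw [heq]; exact norm_sub_le _ _
      exact le_trans (hκ_mono _ _ (norm_nonneg _) hnrm)
        (hκ_sub _ _ (norm_nonneg _) (norm_nonneg _))
    have hn0 : (0:ℝ) ≤ (n:ℝ) := Nat.cast_nonneg n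
    nlinarith [mul_le_mul_of_nonneg_left h1 (mul_nonneg hn0 hu.le),
      mul_le_mul_of_nonneg_left h2 hn0]
  refine ⟨fun n hn y z => ⟨hlow n hn y z, hup n hn y z⟩, ?_, ?_, ?_⟩
  · -- part (ii)
    intro n hn y z
    rw [hgn, hgn]
    apply ciSup_mono (hbdd n hn y z)
    intro pq
    have hP1 : 0 ≤ util * |y - pq.1| := by positivity
    have hP2 : 0 ≤ κ ‖z - pq.2‖ := hκ_nonneg _ (norm_nonneg _)
    push_cast
    nlinarith
  · -- part (iii)
    intro n hn y₁ z₁ y₂ z₂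
    rw [abs_sub_le_iff]
    constructor
    · have := key n hn y₁ z₁ y₂ z₂
      linarith
    · have h2 := key n hn y₂ z₂ y₁ z₁
      rw [abs_sub_comm y₂ y₁, norm_sub_rev z₂ z₁] at h2
      linarith
  · -- part (iv)
    intro ys zs y z hys hzs
    rw [Metric.tendsto_atTop]
    intro ε hε
    -- continuity at (y,z)
    obtain ⟨δ, hδ, hδball⟩ :
        ∃ δ > 0, ∀ pq : ℝ × EuclideanSpace ℝ (Fin d),
          dist pq (y, z) < δ → |g pq.1 pq.2 - g y z| < ε/2 := by
      have hc : ContinuousAt (fun pq : ℝ × EuclideanSpace ℝ (Fin d) => g pq.1 pq.2) (y, z) :=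
        hg_cont.continuousAt
      obtain ⟨δ, hδ, h⟩ := Metric.continuousAt_iff.mp hc (ε/2) (by linarith)
      exact ⟨δ, hδ, fun pq hpq => by
        have := h hpq
        rwa [Real.dist_eq] at this⟩
    set δ' := min (δ/4) 1 with hδ'def
    have hδ'pos : 0 < δ' := lt_min (by linarith) one_pos
    have hδ'le : δ' ≤ δ/4 := min_le_left _ _
    have hδ'le1 : δ' ≤ 1 := min_le_right _ _
    set c := min (util * δ') (κ δ') with hcdef
    have hcpos : 0 < c := lt_min (by positivity) (hκ_pos δ' hδ'pos)
    set M := ftil + util * (|y| + 1) + κ (‖z‖ + 1) with hMdef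
    -- eventual conditions
    have E1 : ∀ᶠ n in atTop, dist (ys n) y < δ' :=
      Metric.tendsto_nhds.mp hys δ' hδ'pos
    have E2 : ∀ᶠ n in atTop, dist (zs n) z < δ' :=
      Metric.tendsto_nhds.mp hzs δ' hδ'pos
    have E3 : ∀ᶠ n : ℕ in atTop, 1 ≤ n := eventually_ge_atTop 1
    have E4 : ∀ᶠ n : ℕ in atTop, M - ((n:ℝ) - 1) * c ≤ g y z + ε/2 := by
      have h1 : Tendsto (fun n : ℕ => ((n:ℝ) - 1) * c) atTop atTop := by
        have := (tendsto_atTop_add_const_right atTop (-1 : ℝ)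
          tendsto_natCast_atTop_atTop).atTop_mul_const hcpos
        simpa [sub_eq_add_neg] using this
      have h2 : Tendsto (fun n : ℕ => M - ((n:ℝ) - 1) * c) atTop atBot := by
        have := tendsto_atBot_add_const_left atTop M (tendsto_neg_atTop_atBot.comp h1)
        simpa [sub_eq_add_neg, Function.comp] using this
      exact h2.eventually_le_atBot _
    have hgconv : Tendsto (fun n => g (ys n) (zs n)) atTop (𝓝 (g y z)) :=
      (hg_cont.tendsto (y, z)).comp (hys.prodMk_nhds hzs)
    have E5 : ∀ᶠ n in atTop, dist (g (ys n) (zs n)) (g y z) < ε/2 :=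
      Metric.tendsto_nhds.mp hgconv (ε/2) (by linarith)
    rw [← eventually_atTop]
    filter_upwards [E1, E2, E3, E4, E5] with n h1 h2 h3 h4 h5
    rw [Real.dist_eq] at h1 h5
    rw [dist_eq_norm] at h2
    -- upper bound
    have hupper : gn n (ys n) (zs n) ≤ g y z + ε/2 := by
      rw [hgn]
      apply ciSup_le
      intro pq
      have hpen1 : 0 ≤ (n:ℝ) * util * |ys n - pq.1| := by positivity
      have hpen2 : 0 ≤ (n:ℝ) * κ ‖zs n - pq.2‖ :=
        mul_nonneg (Nat.cast_nonneg n) (hκ_nonneg _ (norm_nonneg _))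
      by_cases hcase : |ys n - pq.1| ≤ δ' ∧ ‖zs n - pq.2‖ ≤ δ'
      · -- near points
        have hdist : dist pq (y, z) < δ := by
          rw [Prod.dist_eq]
          apply max_lt
          · rw [Real.dist_eq]
            have ha : |pq.1 - y| ≤ |pq.1 - ys n| + |ys n - y| := abs_sub_le _ _ _
            rw [abs_sub_comm pq.1 (ys n)] at ha
            linarith [hcase.1]
          · rw [dist_eq_norm]
            have hb : ‖pq.2 - z‖ ≤ ‖pq.2 - zs n‖ + ‖zs n - z‖ := by
              have heq : pq.2 - z = (pq.2 - zs n) + (zs n - z) := by abel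
              rw [heq]; exact norm_add_le _ _
            rw [norm_sub_rev pq.2 (zs n)] at hb
            linarith [hcase.2]
        have := (abs_lt.mp (hδball pq hdist)).2
        linarith
      · -- far points: penalty dominates
        have hPc : c ≤ util * |ys n - pq.1| + κ ‖zs n - pq.2‖ := by
          rcases le_or_gt (|ys n - pq.1|) δ' with hA | hA
          · have hB : δ' < ‖zs n - pq.2‖ := by
              by_contra hB
              push_neg at hB
              exact hcase ⟨hA, hB⟩
            have hk : κ δ' ≤ κ ‖zs n - pq.2‖ := hκ_mono _ _ hδ'pos.le hB.le
            have hu0 : 0 ≤ util * |ys n - pq.1| := by positivity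
            have := min_le_right (util * δ') (κ δ')
            linarith
          · have hm : util * δ' ≤ util * |ys n - pq.1| :=
              mul_le_mul_of_nonneg_left hA.le hu.le
            have hk0 : 0 ≤ κ ‖zs n - pq.2‖ := hκ_nonneg _ (norm_nonneg _)
            have := min_le_left (util * δ') (κ δ')
            linarith
        have hgpq : g pq.1 pq.2 ≤ M + (util * |ys n - pq.1| + κ ‖zs n - pq.2‖) := by
          have habs : g pq.1 pq.2 ≤ ftil + util * |pq.1| + κ ‖pq.2‖ :=
            (abs_le.mp (hg_growth pq.1 pq.2)).2
          have h1' : |pq.1| ≤ |ys n| + |ys n - pq.1| := by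
            have := abs_sub_abs_le_abs_sub pq.1 (ys n)
            rw [abs_sub_comm] at this
            linarith
          have h1'' : |ys n| ≤ |y| + 1 := by
            have := abs_sub_abs_le_abs_sub (ys n) y
            linarith
          have h2' : κ ‖pq.2‖ ≤ κ (‖z‖ + 1) + κ ‖zs n - pq.2‖ := by
            have hzn : ‖zs n‖ ≤ ‖z‖ + 1 := by
              have := norm_sub_norm_le (zs n) z
              linarith
            have hnn : ‖pq.2‖ ≤ (‖z‖ + 1) + ‖zs n - pq.2‖ := by
              have := norm_sub_norm_le pq.2 (zs n)
              rw [norm_sub_rev] at this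
              linarith
            have hsub' := hκ_sub (‖z‖ + 1) ‖zs n - pq.2‖ (by positivity) (norm_nonneg _)
            have hmono' := hκ_mono ‖pq.2‖ ((‖z‖ + 1) + ‖zs n - pq.2‖) (norm_nonneg _) hnn
            linarith
          have hutil1 := mul_le_mul_of_nonneg_left h1' hu.le
          have hutil2 := mul_le_mul_of_nonneg_left h1'' hu.le
          rw [hMdef]
          linarith
        have hn1 : (1:ℝ) ≤ (n:ℝ) := by exact_mod_cast h3
        have hmul : ((n:ℝ) - 1) * c ≤ ((n:ℝ) - 1) * (util * |ys n - pq.1| + κ ‖zs n - pq.2‖) :=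
          mul_le_mul_of_nonneg_left hPc (by linarith)
        have expand : ((n:ℝ) - 1) * (util * |ys n - pq.1| + κ ‖zs n - pq.2‖)
            = (n:ℝ) * util * |ys n - pq.1| + (n:ℝ) * κ ‖zs n - pq.2‖
              - (util * |ys n - pq.1| + κ ‖zs n - pq.2‖) := by ring
        linarith
    -- lower bound
    have hlower : g y z - ε/2 < gn n (ys n) (zs n) := by
      have := hlow n h3 (ys n) (zs n)
      have h5' := (abs_lt.mp h5).1
      linarith
    rw [Real.dist_eq, abs_lt]
    constructor <;> linarith
end
end
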